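/- arXiv:1506.02548 — 7 statements merged into one kernel-verified Lean document; each statement's English description precedes it below -/
import Mathlib

section
/- Let q be a prime power, let m, n be positive integers, let c_0, c_1, …, c_{n-1} ∈ F_q and A ∈ M_m(F_q), and let T be the (m,n)-block companion matrix over F_q whose (i,j) block (0-indexed, blocks of size m×m) is I_m if i = j+1 and j < n−1, is c_i·A if j = n−1, and is the zero matrix otherwise. (a) If c_0 ≠ 0 and A is invertible, then for every row vector S_0 ∈ F_q^{mn} the sequence S_k = S_0·T^k is purely periodic, i.e., there exists r ≥ 1 with S_{k+r} = S_k for all k ≥ 0. (b) Conversely, if for every nonzero b ∈ F_q^m the sequence S_k = S_0·T^k with initial state S_0 = (b, 0, …, 0) ∈ F_q^{mn} is purely periodic, then the matrix c_0·A is invertible. -/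
/-!
Right multiplication by `T` shifts block `j + 1` of a row vector into block `j` and feeds
`∑ⱼ cⱼ vⱼ A` into the last block, so `v T = 0` exactly when `v` is supported on the first block
and `v₀ (c₀ A) = 0`. Hence `T` is invertible as soon as `c₀ A` is, and an invertible matrix over
a finite field has finite order, which gives periodicity. If `c₀ A` is singular, a nonzero `b`
with `b (c₀ A) = 0` yields a state `(b, 0, …, 0)` killed by `T`, which can never recur.
-/

/-- The `(m,n)`-block companion matrix over `F` determined by scalars
`c : Fin n → F` and an `m × m` matrix `A`. -/
def blockCompanion {F : Type*} [CommRing F] (m n : ℕ) (c : Fin n → F)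
    (A : Matrix (Fin m) (Fin m) F) :
    Matrix (Fin n × Fin m) (Fin n × Fin m) F :=
  fun x y =>
    if (y.1 : ℕ) = n - 1 then c x.1 * A x.2 y.2
    else if (x.1 : ℕ) = (y.1 : ℕ) + 1 then (if x.2 = y.2 then (1 : F) else 0)
    else 0

namespace blockCompanion

variable {F : Type*} [CommRing F] {m n : ℕ} (c : Fin n → F) (A : Matrix (Fin m) (Fin m) F)

theorem vecMul_apply_of_val_eq_succ (v : Fin n × Fin m → F) {x y : Fin n × Fin m}
    (h₁ : (x.1 : ℕ) = y.1 + 1) (h₂ : x.2 = y.2) :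
    Matrix.vecMul v (blockCompanion m n c A) y = v x := by
  have hy : (y.1 : ℕ) ≠ n - 1 := by omega
  rw [Matrix.vecMul, dotProduct, Finset.sum_eq_single x]
  · simp [blockCompanion, hy, h₁, h₂]
  · intro p _ hp
    have hpx : ¬((p.1 : ℕ) = y.1 + 1 ∧ p.2 = y.2) := fun h ↦
      hp (Prod.ext (by omega) (h.2.trans h₂.symm))
    simp only [blockCompanion, if_neg hy]
    split_ifs <;> simp_all
  · simp

theorem vecMul_apply_of_val_eq_last (v : Fin n × Fin m → F) {y : Fin n × Fin m}
    (hy : (y.1 : ℕ) = n - 1) :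
    Matrix.vecMul v (blockCompanion m n c A) y = ∑ p, v p * (c p.1 * A p.2 y.2) := by
  simp [Matrix.vecMul, dotProduct, blockCompanion, hy]

theorem vecMul_apply_of_val_eq_last_of_support (hn : 0 < n) (v : Fin n × Fin m → F)
    (hv : ∀ p : Fin n × Fin m, (p.1 : ℕ) ≠ 0 → v p = 0) {y : Fin n × Fin m}
    (hy : (y.1 : ℕ) = n - 1) :
    Matrix.vecMul v (blockCompanion m n c A) y =
      Matrix.vecMul (fun i ↦ v (⟨0, hn⟩, i)) (c ⟨0, hn⟩ • A) y.2 := by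
  rw [vecMul_apply_of_val_eq_last c A v hy, Fintype.sum_prod_type,
    Finset.sum_eq_single (⟨0, hn⟩ : Fin n)]
  · simp [Matrix.vecMul, dotProduct, mul_left_comm]
  · intro j _ hj
    exact Finset.sum_eq_zero fun i _ ↦ by
      rw [hv (j, i) (by simpa [Fin.ext_iff] using hj), zero_mul]
  · simp

theorem vecMul_eq_zero_iff (hn : 0 < n) (v : Fin n × Fin m → F) :
    Matrix.vecMul v (blockCompanion m n c A) = 0 ↔
      (∀ p : Fin n × Fin m, (p.1 : ℕ) ≠ 0 → v p = 0) ∧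
        Matrix.vecMul (fun i ↦ v (⟨0, hn⟩, i)) (c ⟨0, hn⟩ • A) = 0 := by
  constructor
  · intro h
    have hv : ∀ p : Fin n × Fin m, (p.1 : ℕ) ≠ 0 → v p = 0 := by
      rintro ⟨j, i⟩ (hj : (j : ℕ) ≠ 0)
      rw [← vecMul_apply_of_val_eq_succ c A v (x := (j, i)) (y := (⟨j - 1, by omega⟩, i))
        (by simp only; omega) rfl, h, Pi.zero_apply]
    refine ⟨hv, funext fun i ↦ ?_⟩
    rw [← vecMul_apply_of_val_eq_last_of_support c A hn v hv (y := (⟨n - 1, by omega⟩, i)) rfl,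
      h]
    rfl
  · rintro ⟨hv, h₀⟩
    funext y
    by_cases hy : (y.1 : ℕ) = n - 1
    · rw [vecMul_apply_of_val_eq_last_of_support c A hn v hv hy, h₀]
      rfl
    · have hlt : (y.1 : ℕ) + 1 < n := by omega
      rw [vecMul_apply_of_val_eq_succ c A v (x := (⟨y.1 + 1, hlt⟩, y.2)) rfl rfl]
      exact hv _ (Nat.succ_ne_zero _)

end blockCompanion

theorem isUnit_blockCompanion {F : Type*} [Field F] {m n : ℕ} (hn : 0 < n) (c : Fin n → F)
    (A : Matrix (Fin m) (Fin m) F) (h : IsUnit (c ⟨0, hn⟩ • A)) :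
    IsUnit (blockCompanion m n c A) := by
  rw [Matrix.isUnit_iff_isUnit_det, isUnit_iff_ne_zero]
  intro hdet
  obtain ⟨v, hv0, hv⟩ := Matrix.exists_vecMul_eq_zero_iff.mpr hdet
  obtain ⟨hsupp, h₀⟩ := (blockCompanion.vecMul_eq_zero_iff c A hn v).mp hv
  have hfirst : (fun i ↦ v (⟨0, hn⟩, i)) = 0 :=
    (Matrix.vecMul_injective_iff_isUnit.mpr h) (h₀.trans (Matrix.zero_vecMul _).symm)
  refine hv0 (funext fun ⟨j, i⟩ ↦ ?_)
  by_cases hj : (j : ℕ) = 0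
  · obtain rfl : j = ⟨0, hn⟩ := Fin.ext hj
    exact congrFun hfirst i
  · exact hsupp (j, i) hj

theorem Matrix.eq_zero_of_vecMul_pow_eq_self {ι R : Type*} [Fintype ι] [DecidableEq ι]
    [Semiring R] {T : Matrix ι ι R} {v : ι → R} {r : ℕ} (hr : 0 < r)
    (hv : Matrix.vecMul v T = 0) (hvr : Matrix.vecMul v (T ^ r) = v) : v = 0 := by
  obtain ⟨s, rfl⟩ : ∃ s, r = s + 1 := ⟨r - 1, by omega⟩
  rw [← hvr, pow_succ', ← Matrix.vecMul_vecMul, hv, Matrix.zero_vecMul]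

theorem stmt1_general (F : Type) [Field F] [Fintype F] (m n : ℕ) (hn : 0 < n)
    (c : Fin n → F) (A : Matrix (Fin m) (Fin m) F) :
    (c ⟨0, hn⟩ ≠ 0 → IsUnit A →
      ∀ S0 : Fin n × Fin m → F, ∃ r : ℕ, 1 ≤ r ∧
        ∀ k : ℕ,
          Matrix.vecMul S0 (blockCompanion m n c A ^ (k + r)) =
            Matrix.vecMul S0 (blockCompanion m n c A ^ k)) ∧
    ((∀ b : Fin m → F, b ≠ 0 →
        ∃ r : ℕ, 1 ≤ r ∧
          ∀ k : ℕ,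
            Matrix.vecMul (fun x : Fin n × Fin m => if x.1 = ⟨0, hn⟩ then b x.2 else 0)
                (blockCompanion m n c A ^ (k + r)) =
              Matrix.vecMul (fun x : Fin n × Fin m => if x.1 = ⟨0, hn⟩ then b x.2 else 0)
                (blockCompanion m n c A ^ k)) →
      IsUnit (c ⟨0, hn⟩ • A)) := by
  constructor
  · intro hc hA S0
    have hT := isUnit_blockCompanion hn c A (hA.smul hc.isUnit.unit)
    obtain ⟨r, hr, hTr⟩ := hT.isOfFinOrder.exists_pow_eq_one
    exact ⟨r, hr, fun k ↦ by rw [pow_add, hTr, mul_one]⟩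
  · intro hperiodic
    by_contra hsing
    obtain ⟨b, hb, hbA⟩ := Matrix.exists_vecMul_eq_zero_iff.mpr <| by
      rwa [Matrix.isUnit_iff_isUnit_det, isUnit_iff_ne_zero, not_not] at hsing
    set S0 : Fin n × Fin m → F := fun x ↦ if x.1 = ⟨0, hn⟩ then b x.2 else 0
    have hS0 : Matrix.vecMul S0 (blockCompanion m n c A) = 0 :=
      (blockCompanion.vecMul_eq_zero_iff c A hn S0).mpr
        ⟨fun p hp ↦ if_neg fun h ↦ hp (congrArg Fin.val h), by simpa [S0] using hbA⟩
    obtain ⟨r, hr, hS0r⟩ := hperiodic b hb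
    have hS0_zero := Matrix.eq_zero_of_vecMul_pow_eq_self hr hS0 <| by
      simpa using hS0r 0
    exact hb (funext fun i ↦ by simpa [S0] using congrFun hS0_zero (⟨0, hn⟩, i))

/-- (a) If `c ⟨0, hn⟩ ≠ 0` and `A` is invertible, then for every row vector `S0` the
sequence `S_k = S0 · T^k` is purely periodic.
(b) Conversely, if for every nonzero `b ∈ F^m` the sequence starting from the
initial state `(b, 0, …, 0)` is purely periodic, then `c 0 • A` is invertible. -/
theorem stmt1 (F : Type) [Field F] [Fintype F] (m n : ℕ) (hm : 0 < m) (hn : 0 < n)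
    (c : Fin n → F) (A : Matrix (Fin m) (Fin m) F) :
    (c ⟨0, hn⟩ ≠ 0 → IsUnit A →
      ∀ S0 : Fin n × Fin m → F, ∃ r : ℕ, 1 ≤ r ∧
        ∀ k : ℕ,
          Matrix.vecMul S0 (blockCompanion m n c A ^ (k + r)) =
            Matrix.vecMul S0 (blockCompanion m n c A ^ k)) ∧
    ((∀ b : Fin m → F, b ≠ 0 →
        ∃ r : ℕ, 1 ≤ r ∧
          ∀ k : ℕ,
            Matrix.vecMul (fun x : Fin n × Fin m => if x.1 = ⟨0, hn⟩ then b x.2 else 0)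
                (blockCompanion m n c A ^ (k + r)) =
              Matrix.vecMul (fun x : Fin n × Fin m => if x.1 = ⟨0, hn⟩ then b x.2 else 0)
                (blockCompanion m n c A ^ k)) →
      IsUnit (c ⟨0, hn⟩ • A)) :=
  stmt1_general F m n hn c A
end

section
/- Let q be a prime power, let m, n be positive integers, let c_1, …, c_{n-1} ∈ F_q, let B ∈ M_m(F_q) be invertible, and let T = T(c_1,…,c_{n−1};B) be the associated (m,n)-block companion matrix. Write the characteristic polynomial of B as ψ_B(X) = ∑_{i=0}^m b_i X^i (monic, b_m = 1) and set g(X) = 1 + c_1X + ⋯ + c_{n−1}X^{n−1} ∈ F_q[X]. Then the characteristic polynomial of T equals ∑_{i=0}^m b_i · X^{n·i} · g(X)^{m−i}. -/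
/-!
Left multiplication by a matrix of determinant `1` replaces the first block row of `X - T` by
`∑ⱼ Xʲ · (block row j)`; since `T` shifts block `j` to block `j + 1`, this row telescopes to
`(0, …, 0, Xⁿ - g(X) B)`. Rotating the block rows cyclically then gives a block upper triangular
matrix with diagonal blocks `-1, …, -1, Xⁿ - g(X) B`, and the sign of the rotation cancels that
of the `-1` blocks. Finally `det (a - b B) = ∑ bᵢ aⁱ b^(m-i)` is the homogenised characteristic
polynomial of `B`, obtained from `det (a/b - B)` over the fraction field of `F[X]`.
-/

open Polynomial Matrix Finset

namespace Matrix

theorem det_smul_one_sub_smul {R ι : Type*} [CommRing R] [IsDomain R] [Fintype ι]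
    [DecidableEq ι] (A : Matrix ι ι R) (a b : R) :
    (a • (1 : Matrix ι ι R) - b • A).det =
      ∑ i ∈ range (Fintype.card ι + 1),
        A.charpoly.coeff i * a ^ i * b ^ (Fintype.card ι - i) := by
  have hdeg : A.charpoly.natDegree < Fintype.card ι + 1 := by
    rw [charpoly_natDegree_eq_dim]; exact Nat.lt_succ_self _
  rcases eq_or_ne b 0 with rfl | hb
  · rw [sum_eq_single_of_mem _ (self_mem_range_succ _) fun i hi hid => by
      rw [zero_pow (Nat.sub_ne_zero_of_lt (by grind)), mul_zero]]
    have hcoeff : A.charpoly.coeff (Fintype.card ι) = 1 := by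
      simpa [Monic, leadingCoeff, charpoly_natDegree_eq_dim] using A.charpoly_monic
    simp [hcoeff]
  set φ := algebraMap R (FractionRing R)
  have hinj : Function.Injective φ := IsFractionRing.injective R (FractionRing R)
  apply hinj
  have hφb : φ b ≠ 0 := (map_ne_zero_iff φ hinj).mpr hb
  have hmat :
      (a • (1 : Matrix ι ι R) - b • A).map φ = φ b • (scalar ι (φ a / φ b) - A.map φ) := by
    ext i j
    rcases eq_or_ne i j with rfl | hij
    · simp [mul_sub, mul_div_cancel₀ _ hφb]
    · simp [one_apply_ne hij, diagonal_apply_ne _ hij]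
  rw [RingHom.map_det, RingHom.mapMatrix_apply, hmat, det_smul, ← eval_charpoly, charpoly_map,
    eval_map, eval₂_eq_sum_range' φ hdeg, map_sum, mul_sum]
  refine sum_congr rfl fun i hi => ?_
  have hi : i ≤ Fintype.card ι := Nat.lt_succ_iff.mp (mem_range.mp hi)
  conv_lhs => rw [← Nat.sub_add_cancel hi, pow_add, div_pow]
  rw [map_mul, map_mul, map_pow, map_pow, mul_div_assoc', mul_div_assoc',
    div_eq_iff (pow_ne_zero i hφb)]
  ring

theorem BlockTriangular.det_prod_fst {R α β : Type*} [CommRing R] [LinearOrder α] [Fintype α]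
    [Fintype β] [DecidableEq β] {M : Matrix (α × β) (α × β) R}
    (hM : M.BlockTriangular Prod.fst) :
    M.det = ∏ a, (M.submatrix (Prod.mk a) (Prod.mk a)).det := by
  rw [hM.det_fintype]
  refine prod_congr rfl fun a _ => ?_
  let e : {x : α × β // x.1 = a} ≃ β :=
    { toFun := fun x => x.1.2
      invFun := fun k => ⟨(a, k), rfl⟩
      left_inv := by rintro ⟨⟨_, _⟩, rfl⟩; rfl
      right_inv := fun _ => rfl }
  rw [← det_submatrix_equiv_self e]
  congr 1
  ext ⟨⟨i, k⟩, hi⟩ ⟨⟨j, l⟩, hj⟩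
  dsimp only at hi hj
  subst hi hj
  rfl

end Matrix

section BlockCompanion

variable {R : Type*} [CommRing R] {m n : ℕ}

theorem blockCompanion_apply_last (c : Fin (n + 1) → R) (B : Matrix (Fin m) (Fin m) R)
    (x : Fin (n + 1) × Fin m) (l : Fin m) :
    blockCompanion m (n + 1) c B x (Fin.last n, l) = c x.1 * B x.2 l := by
  simp [blockCompanion]

theorem blockCompanion_apply_castSucc (c : Fin (n + 1) → R) (B : Matrix (Fin m) (Fin m) R)
    (x : Fin (n + 1) × Fin m) (j : Fin n) (l : Fin m) :
    blockCompanion m (n + 1) c B x (j.castSucc, l) = if x = (j.succ, l) then 1 else 0 := by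
  have : (j : ℕ) ≠ n := j.isLt.ne
  simp [blockCompanion, this, Prod.ext_iff, Fin.ext_iff, ite_and]

variable (m n)

noncomputable def hornerRowOp : Matrix (Fin (n + 1) × Fin m) (Fin (n + 1) × Fin m) R[X] :=
  of fun x y =>
    if x.1 = 0 then (if x.2 = y.2 then X ^ (y.1 : ℕ) else 0) else (1 : Matrix _ _ R[X]) x y

theorem det_hornerRowOp : (hornerRowOp (R := R) m n).det = 1 := by
  have hbt : (hornerRowOp (R := R) m n).BlockTriangular Prod.fst := by
    rintro ⟨a, k⟩ ⟨b, l⟩ (hba : b < a)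
    simp [hornerRowOp, ((Fin.zero_le b).trans_lt hba).ne', hba.ne']
  rw [hbt.det_prod_fst]
  refine prod_eq_one fun a _ => ?_
  rw [← det_one (n := Fin m) (R := R[X])]
  congr 1
  ext k l
  by_cases ha : a = 0 <;> simp [hornerRowOp, one_apply, ha]

def blockRotation : Equiv.Perm (Fin (n + 1) × Fin m) :=
  Equiv.prodCongrLeft fun _ => finRotate (n + 1)

theorem sign_blockRotation : Equiv.Perm.sign (blockRotation m n) = (-1) ^ (m * n) := by
  simp [blockRotation, Equiv.Perm.sign_prodCongrLeft, sign_finRotate, ← pow_mul, mul_comm]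

variable {m n}

noncomputable def rowReduced (c : Fin (n + 1) → R) (B : Matrix (Fin m) (Fin m) R) :
    Matrix (Fin (n + 1) × Fin m) (Fin (n + 1) × Fin m) R[X] :=
  (hornerRowOp m n * (blockCompanion m (n + 1) c B).charmatrix).submatrix (blockRotation m n) id

variable (c : Fin (n + 1) → R) (B : Matrix (Fin m) (Fin m) R)

theorem rowReduced_apply_last (k : Fin m) (y : Fin (n + 1) × Fin m) :
    rowReduced c B (Fin.last n, k) y =
      if y.1 = Fin.last n then
        ((X : R[X]) ^ (n + 1) • (1 : Matrix (Fin m) (Fin m) R[X]) -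
          (∑ i, C (c i) * X ^ (i : ℕ)) • B.map C : Matrix (Fin m) (Fin m) R[X]) k y.2
      else 0 := by
  have hrow : rowReduced c B (Fin.last n, k) y =
      ∑ j : Fin (n + 1), X ^ (j : ℕ) * (blockCompanion m (n + 1) c B).charmatrix (j, k) y := by
    simp [rowReduced, blockRotation, hornerRowOp, mul_apply, Fintype.sum_prod_type]
  rw [hrow]
  obtain ⟨b, l⟩ := y
  induction b using Fin.lastCases with
  | last =>
    simp only [charmatrix_apply, diagonal_apply, blockCompanion_apply_last]
    simp [Prod.ext_iff, mul_sub, ite_and, one_apply, pow_succ, sum_mul]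
    congr 1
    funext i
    ring
  | cast j =>
    simp [charmatrix_apply, diagonal_apply, blockCompanion_apply_castSucc, Prod.ext_iff, mul_sub,
      ite_and, apply_ite C, pow_succ]

theorem rowReduced_apply_castSucc (i : Fin n) (k : Fin m) (y : Fin (n + 1) × Fin m) :
    rowReduced c B (i.castSucc, k) y = (blockCompanion m (n + 1) c B).charmatrix (i.succ, k) y := by
  simp [rowReduced, blockRotation, finRotate_apply, Fin.coeSucc_eq_succ, hornerRowOp, mul_apply,
    Fin.succ_ne_zero, one_apply, ite_mul]

theorem blockTriangular_rowReduced : (rowReduced c B).BlockTriangular Prod.fst := by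
  rintro ⟨a, k⟩ ⟨b, l⟩ (hba : b < a)
  induction a using Fin.lastCases with
  | last => simp [rowReduced_apply_last, hba.ne]
  | cast i =>
    induction b using Fin.lastCases with
    | last => exact absurd hba (not_lt.mpr (Fin.le_last _))
    | cast j =>
      rw [Fin.castSucc_lt_castSucc_iff, Fin.lt_def] at hba
      simp [rowReduced_apply_castSucc, blockCompanion_apply_castSucc, Prod.ext_iff, Fin.ext_iff,
        hba.ne', (hba.trans (Nat.lt_succ_self _)).ne']

theorem det_rowReduced :
    (rowReduced c B).det = (-1) ^ (m * n) *
      ((X : R[X]) ^ (n + 1) • (1 : Matrix (Fin m) (Fin m) R[X]) -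
        (∑ i, C (c i) * X ^ (i : ℕ)) • B.map C).det := by
  have hblock (i : Fin n) :
      (rowReduced c B).submatrix (Prod.mk i.castSucc) (Prod.mk i.castSucc) = -1 := by
    ext k l
    simp [rowReduced_apply_castSucc, blockCompanion_apply_castSucc, one_apply, Fin.ext_iff]
  have hblock_last : (rowReduced c B).submatrix (Prod.mk (Fin.last n)) (Prod.mk (Fin.last n)) =
      (X : R[X]) ^ (n + 1) • (1 : Matrix (Fin m) (Fin m) R[X]) -
        (∑ i, C (c i) * X ^ (i : ℕ)) • B.map C := by
    ext k l
    simp [rowReduced_apply_last]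
  rw [(blockTriangular_rowReduced c B).det_prod_fst, Fin.prod_univ_castSucc, hblock_last]
  simp [hblock, det_neg, pow_mul]

theorem charpoly_blockCompanion_succ :
    (blockCompanion m (n + 1) c B).charpoly =
      ((X : R[X]) ^ (n + 1) • (1 : Matrix (Fin m) (Fin m) R[X]) -
        (∑ i, C (c i) * X ^ (i : ℕ)) • B.map C).det := by
  have h := det_permute (blockRotation m n)
    (hornerRowOp m n * (blockCompanion m (n + 1) c B).charmatrix)
  rw [det_mul, det_hornerRowOp, one_mul, sign_blockRotation, ← rowReduced, det_rowReduced] at h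
  push_cast at h
  exact ((isUnit_neg_one.pow _).mul_left_cancel h).symm

end BlockCompanion

theorem charpoly_blockCompanion {R : Type*} [CommRing R] (m n : ℕ) (c : Fin n → R)
    (B : Matrix (Fin m) (Fin m) R) :
    (blockCompanion m n c B).charpoly =
      ((X : R[X]) ^ n • (1 : Matrix (Fin m) (Fin m) R[X]) -
        (∑ i, C (c i) * X ^ (i : ℕ)) • B.map C).det := by
  cases n with
  | zero => simp
  | succ n => exact charpoly_blockCompanion_succ c B

theorem stmt4_general (F : Type) [Field F] (m n : ℕ) (c : Fin n → F) (B : Matrix (Fin m) (Fin m) F)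
    (g : Polynomial F) (hg : g = ∑ i : Fin n, Polynomial.C (c i) * Polynomial.X ^ (i : ℕ)) :
    (blockCompanion m n c B).charpoly =
      ∑ i ∈ Finset.range (m + 1),
        Polynomial.C (B.charpoly.coeff i) * Polynomial.X ^ (n * i) * g ^ (m - i) := by
  rw [charpoly_blockCompanion, ← hg, det_smul_one_sub_smul, charpoly_map, Fintype.card_fin]
  refine sum_congr rfl fun i _ => ?_
  rw [coeff_map, pow_mul]

/-- Writing `ψ_B(X) = ∑ b_i X^i` for the characteristic polynomial of `B` and
`g(X) = 1 + c_1 X + ⋯ + c_{n-1} X^{n-1}`, the characteristic polynomial of the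
block companion matrix `T` (with `c 0 = 1`) equals
`∑_{i=0}^m b_i X^{n i} g(X)^{m-i}`. -/
theorem stmt4 (F : Type) [Field F] [Fintype F] (m n : ℕ) (hm : 0 < m) (hn : 0 < n)
    (c : Fin n → F) (hc0 : c ⟨0, hn⟩ = 1)
    (B : Matrix (Fin m) (Fin m) F) (hB : IsUnit B)
    (g : Polynomial F) (hg : g = ∑ i : Fin n, Polynomial.C (c i) * Polynomial.X ^ (i : ℕ)) :
    (blockCompanion m n c B).charpoly =
      ∑ i ∈ Finset.range (m + 1),
        Polynomial.C (B.charpoly.coeff i) * Polynomial.X ^ (n * i) * g ^ (m - i) :=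
  stmt4_general F m n c B g hg
end

section
/- Let q be a prime power and m, n positive integers. Let h(X) = ∑_{i=0}^m h_i X^i ∈ F_q[X] be monic of degree m and let g ∈ F_q[X] satisfy g(0) = 1 and deg g ≤ n−1. If the polynomial f(X) = ∑_{i=0}^m h_i · X^{n·i} · g(X)^{m−i} is irreducible over F_q, then h is irreducible over F_q. -/
/-!
Homogenizing `p` in its own degree and substituting `(X ^ n, g)` is multiplicative in `p`, so a
factorization `h = a * b` yields a factorization of `f`. Since `deg g < n`, the coefficient of
`X ^ (n * deg p)` in the image of `p` is the leading coefficient of `p`; hence the image is a unit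
only when `p` is a nonzero constant, and irreducibility of `f` pulls back to `h`.
-/

open Polynomial Finset

namespace Polynomial

variable {R A : Type*} [CommSemiring R] [NoZeroDivisors R] [CommSemiring A] [Algebra R A]

/-- `p ↦ y ^ deg p * p (x / y)`, written without division as the homogenization of `p` in its
own degree evaluated at `(x, y)`. -/
noncomputable def homogenizeAeval (x y : A) : R[X] →*₀ A where
  toFun p := MvPolynomial.aeval ![x, y] (p.homogenize p.natDegree)
  map_zero' := by simp
  map_one' := by simp
  map_mul' p q := by
    obtain rfl | hp := eq_or_ne p 0
    · simp
    obtain rfl | hq := eq_or_ne q 0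
    · simp
    rw [natDegree_mul hp hq, homogenize_mul _ _ le_rfl le_rfl, map_mul]

theorem homogenizeAeval_apply (x y : A) (p : R[X]) :
    homogenizeAeval x y p = ∑ i ∈ range (p.natDegree + 1),
      algebraMap R A (p.coeff i) * x ^ i * y ^ (p.natDegree - i) := by
  simp only [homogenizeAeval, MonoidWithZeroHom.coe_mk, ZeroHom.coe_mk, homogenize, map_sum,
    Finset.Nat.sum_antidiagonal_eq_sum_range_succ_mk, MvPolynomial.aeval_monomial]
  refine sum_congr rfl fun i _ => ?_
  simp [Finsupp.prod_fintype, Fin.prod_univ_two, mul_assoc]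

theorem homogenizeAeval_C (x y : A) (c : R) : homogenizeAeval x y (C c) = algebraMap R A c := by
  simp [homogenizeAeval_apply]

theorem coeff_homogenizeAeval_X_pow {n : ℕ} {g : R[X]} (hg : g.natDegree < n) (p : R[X]) :
    (homogenizeAeval (X ^ n) g p).coeff (n * p.natDegree) = p.leadingCoeff := by
  simp only [homogenizeAeval_apply, algebraMap_eq, ← pow_mul]
  rw [finsetSum_coeff, sum_eq_single_of_mem p.natDegree (by simp)]
  · simp [coeff_C_mul]
  intro i hi hne
  have hi : i < p.natDegree := lt_of_le_of_ne (Nat.lt_succ_iff.mp (mem_range.mp hi)) hne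
  apply coeff_eq_zero_of_natDegree_lt
  calc _ ≤ n * i + (p.natDegree - i) * g.natDegree := by
        refine natDegree_mul_le.trans (add_le_add ?_ natDegree_pow_le)
        exact natDegree_C_mul_X_pow_le _ _
    _ < n * i + (p.natDegree - i) * n := by gcongr; omega
    _ = n * p.natDegree := by rw [mul_comm _ n, ← mul_add, Nat.add_sub_cancel' hi.le]

theorem isLocalHom_homogenizeAeval_X_pow [Nontrivial R] {n : ℕ} (hn : 0 < n) {g : R[X]}
    (hg : g.natDegree < n) : IsLocalHom (homogenizeAeval (R := R) (X ^ n) g) where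
  map_nonunit p hunit := by
    have hp : p ≠ 0 := by rintro rfl; simp at hunit
    have hdeg : n * p.natDegree = 0 := by
      have := le_natDegree_of_ne_zero <|
        (coeff_homogenizeAeval_X_pow hg p).trans_ne (leadingCoeff_ne_zero.mpr hp)
      rwa [natDegree_eq_zero_of_isUnit hunit, Nat.le_zero] at this
    rw [eq_C_of_natDegree_eq_zero ((mul_eq_zero.mp hdeg).resolve_left hn.ne')] at hunit ⊢
    simpa [homogenizeAeval_C] using hunit

end Polynomial

theorem stmt5_general (F : Type) [Field F] (m n : ℕ) (hn : 0 < n)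
    (h g : Polynomial F) (hdeg : h.natDegree = m)
    (hgdeg : g.natDegree ≤ n - 1)
    (hirr : Irreducible (∑ i ∈ Finset.range (m + 1),
      Polynomial.C (h.coeff i) * Polynomial.X ^ (n * i) * g ^ (m - i))) :
    Irreducible h := by
  have := isLocalHom_homogenizeAeval_X_pow hn (show g.natDegree < n by omega)
  refine Irreducible.of_map (f := homogenizeAeval (X ^ n) g) ?_
  simpa only [homogenizeAeval_apply, hdeg, algebraMap_eq, pow_mul] using hirr

/-- If `h` is monic of degree `m`, `g(0) = 1`, `deg g ≤ n - 1`, and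
`f(X) = ∑ h_i X^{n i} g(X)^{m-i}` is irreducible over `F_q`, then `h` is
irreducible over `F_q`. -/
theorem stmt5 (F : Type) [Field F] [Fintype F] (m n : ℕ) (hm : 0 < m) (hn : 0 < n)
    (h g : Polynomial F) (hmonic : h.Monic) (hdeg : h.natDegree = m)
    (hg0 : Polynomial.eval 0 g = 1) (hgdeg : g.natDegree ≤ n - 1)
    (hirr : Irreducible (∑ i ∈ Finset.range (m + 1),
      Polynomial.C (h.coeff i) * Polynomial.X ^ (n * i) * g ^ (m - i))) :
    Irreducible h :=
  stmt5_general F m n hn h g hdeg hgdeg hirr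
end

section
/- Let q be a prime power, m a positive integer, and p(X) ∈ F_q[X] a monic irreducible polynomial of degree m. Then the number of matrices A ∈ M_m(F_q) whose characteristic polynomial det(X·I_m − A) equals p(X) is ∏_{i=1}^{m−1}(q^m − q^i). -/
/-!
A matrix `A` with characteristic polynomial `p` turns `F^m` into a vector space over
`K = F[X]/(p)` in which `X` acts as `A`; comparing dimensions, it is one-dimensional. Hence every
such `A` is multiplication by the root of `p` transported along some `F`-linear isomorphism
`F^m ≃ K`, and two isomorphisms give the same matrix exactly when they differ by a unit of `K`,
because an `F`-linear endomorphism of `K` commuting with the generator is `K`-linear. So there are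
`|GL_m(F)| / |Kˣ| = ∏_{i<m} (q^m - q^i) / (q^m - 1)` such matrices.
-/

open Polynomial Module

theorem apply_eq_mul_apply_one_of_commute_lmul {R A : Type*} [CommRing R] [CommRing A] [Algebra R A]
    {α : A} (hα : Algebra.adjoin R {α} = ⊤) {u : Module.End R A}
    (hu : Commute u (Algebra.lmul R A α)) (x : A) : u x = x * u 1 := by
  have hle : Algebra.adjoin R {α} ≤ (Subalgebra.centralizer R {u}).comap (Algebra.lmul R A) :=
    Algebra.adjoin_le <| Set.singleton_subset_iff.2 <|
      (Subalgebra.mem_centralizer_iff R).2 fun g hg => by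
        rw [Set.mem_singleton_iff.1 hg]
        exact hu.eq
  have hx : u * Algebra.lmul R A x = Algebra.lmul R A x * u := by
    simpa [Subalgebra.mem_centralizer_iff] using hle (hα ▸ Algebra.mem_top : x ∈ _)
  simpa using LinearMap.congr_fun hx 1

section TransferMul

variable {F K V : Type*} [Field F] [Field K] [Algebra F K] [AddCommGroup V] [Module F V]

noncomputable def transferMul (α : K) (e : V ≃ₗ[F] K) : Module.End F V :=
  e.symm.conj (Algebra.lmul F K α)

theorem transferMul_apply (α : K) (e : V ≃ₗ[F] K) (v : V) :
    transferMul α e v = e.symm (α * e v) := rfl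

theorem transferMul_trans_unit (α : K) (e : V ≃ₗ[F] K) (c : Kˣ) :
    transferMul α (e.trans (DistribMulAction.toLinearEquiv F K c)) = transferMul α e := by
  ext v
  simp [transferMul_apply, Units.smul_def, mul_left_comm _ α]

theorem exists_unit_trans_eq_of_transferMul_eq {α : K} (hα : Algebra.adjoin F {α} = ⊤)
    {e e' : V ≃ₗ[F] K} (h : transferMul α e = transferMul α e') :
    ∃ c : Kˣ, e.trans (DistribMulAction.toLinearEquiv F K c) = e' := by
  let u : K ≃ₗ[F] K := e.symm.trans e'
  have hu : Commute (u : Module.End F K) (Algebra.lmul F K α) := by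
    ext x
    have := congrArg e' (LinearMap.congr_fun h (e.symm x))
    simpa [u, transferMul_apply] using this
  have hu1 : u 1 ≠ 0 := by simp
  refine ⟨Units.mk0 (u 1) hu1, LinearEquiv.ext fun v => ?_⟩
  simpa [u, Units.smul_def, mul_comm] using
    (apply_eq_mul_apply_one_of_commute_lmul hα hu (e v)).symm

noncomputable def unitsEquivFiberTransferMul {α : K} (hα : Algebra.adjoin F {α} = ⊤)
    {f : Module.End F V} (hf : f ∈ Set.range (transferMul α)) :
    Kˣ ≃ {e : V ≃ₗ[F] K // transferMul α e = f} :=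
  Equiv.ofBijective
    (fun c => ⟨hf.choose.trans (DistribMulAction.toLinearEquiv F K c),
      (transferMul_trans_unit α _ c).trans hf.choose_spec⟩)
    ⟨fun c c' h => Units.ext <| by
        simpa [Units.smul_def] using congrArg (fun e => e.1 (hf.choose.symm 1)) h,
      fun ⟨e, he⟩ => (exists_unit_trans_eq_of_transferMul_eq hα
        (hf.choose_spec.trans he.symm)).imp fun _ hc => Subtype.ext hc⟩

theorem card_linearEquiv_eq_card_range_transferMul_mul {α : K}
    (hα : Algebra.adjoin F {α} = ⊤) :
    Nat.card (V ≃ₗ[F] K) =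
      Nat.card (Set.range (transferMul (F := F) (V := V) α)) * Nat.card Kˣ := by
  rw [← Nat.card_prod]
  refine Nat.card_congr <|
    (Equiv.sigmaFiberEquiv (Set.rangeFactorization (transferMul α))).symm.trans <|
      (Equiv.sigmaCongrRight fun f => ?_).trans (Equiv.sigmaEquivProd _ _)
  exact (Equiv.subtypeEquivRight fun e => Subtype.ext_iff).trans
    (unitsEquivFiberTransferMul hα f.2).symm

variable [FiniteDimensional F V] (pb : PowerBasis F K)

theorem charpoly_transferMul_gen (e : V ≃ₗ[F] K) :
    (transferMul pb.gen e).charpoly = minpoly F pb.gen := by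
  have := pb.finite
  rw [transferMul, LinearEquiv.charpoly_conj, ← LinearMap.charpoly_toMatrix _ pb.basis]
  exact charpoly_leftMulMatrix pb

theorem exists_transferMul_gen_eq {f : Module.End F V} (hf : aeval f (minpoly F pb.gen) = 0)
    (hdim : finrank F V = finrank F K) : ∃ e : V ≃ₗ[F] K, transferMul pb.gen e = f := by
  have := pb.finite
  let ρ : K →ₐ[F] Module.End F V := pb.lift f hf
  let _ : Module K V := Module.compHom V ρ.toRingHom
  have : IsScalarTower F K V := ⟨fun a k v => by
    change ρ (a • k) v = a • ρ k v
    rw [map_smul, LinearMap.smul_apply]⟩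
  have : FiniteDimensional K V := FiniteDimensional.right F K V
  have hrank : finrank K V = finrank K K := by
    rw [finrank_self]
    refine Nat.eq_of_mul_eq_mul_left (finrank_pos (R := F) (M := K)) ?_
    rw [Module.finrank_mul_finrank, hdim, mul_one]
  let eK : V ≃ₗ[K] K := LinearEquiv.ofFinrankEq V K hrank
  refine ⟨eK.restrictScalars F, LinearMap.ext fun v => ?_⟩
  change eK.symm (pb.gen • eK v) = f v
  rw [← map_smul, eK.symm_apply_apply]
  exact LinearMap.congr_fun (pb.lift_gen f hf) v

theorem range_transferMul_gen :
    Set.range (transferMul (V := V) pb.gen) = {f | f.charpoly = minpoly F pb.gen} := by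
  have := pb.finite
  refine Set.Subset.antisymm (Set.range_subset_iff.2 (charpoly_transferMul_gen pb))
    fun f (hf : f.charpoly = _) => exists_transferMul_gen_eq pb ?_ ?_
  · rw [← hf]
    exact f.aeval_self_charpoly
  · rw [← f.charpoly_natDegree, hf, pb.natDegree_minpoly, pb.finrank]

theorem card_linearEquiv_eq_card_charpoly_eq_minpoly_mul :
    Nat.card (V ≃ₗ[F] K) =
      Nat.card {f : Module.End F V // f.charpoly = minpoly F pb.gen} * Nat.card Kˣ := by
  rw [card_linearEquiv_eq_card_range_transferMul_mul pb.adjoin_gen_eq_top, range_transferMul_gen]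
  rfl

end TransferMul

theorem card_linearEquiv_eq_card_GL {F V W : Type*} [Field F] [AddCommGroup V] [Module F V]
    [AddCommGroup W] [Module F W] [FiniteDimensional F V] [FiniteDimensional F W] {n : ℕ}
    (hV : finrank F V = n) (hW : finrank F W = n) :
    Nat.card (V ≃ₗ[F] W) = Nat.card (GL (Fin n) F) := by
  let eV := LinearEquiv.ofFinrankEq (R := F) V (Fin n → F) (by simpa using hV)
  let eW := LinearEquiv.ofFinrankEq (R := F) W (Fin n → F) (by simpa using hW)
  refine Nat.card_congr <| Equiv.trans ?_ (Matrix.GeneralLinearGroup.toLin.trans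
    (LinearMap.GeneralLinearGroup.generalLinearEquiv F (Fin n → F))).toEquiv.symm
  exact ⟨fun g => eV.symm.trans (g.trans eW), fun g => eV.trans (g.trans eW.symm),
    fun g => by ext; simp, fun g => by ext; simp⟩

/-- For a monic irreducible polynomial `p` of degree `m` over `F_q`, the number
of `m × m` matrices over `F_q` with characteristic polynomial `p` is
`∏_{i=1}^{m-1} (q^m - q^i)`. -/
theorem stmt6 (F : Type) [Field F] [Fintype F] (m : ℕ) (hm : 0 < m)
    (p : Polynomial F) (hmonic : p.Monic) (hdeg : p.natDegree = m)
    (hirr : Irreducible p) :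
    Nat.card {A : Matrix (Fin m) (Fin m) F // A.charpoly = p} =
      ∏ i ∈ Finset.Ico 1 m, (Fintype.card F ^ m - Fintype.card F ^ i) := by
  have : Fact (Irreducible p) := ⟨hirr⟩
  let pb := AdjoinRoot.powerBasis hmonic.ne_zero
  have := pb.finite
  have hK : finrank F (AdjoinRoot p) = m := pb.finrank.trans hdeg
  have hunits : Nat.card (AdjoinRoot p)ˣ = Fintype.card F ^ m - 1 := by
    rw [Nat.card_units, Module.natCard_eq_pow_finrank (K := F), hK, Nat.card_eq_fintype_card]
  have hmat : Nat.card {A : Matrix (Fin m) (Fin m) F // A.charpoly = p} =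
      Nat.card {f : Module.End F (Fin m → F) // f.charpoly = p} :=
    Nat.card_congr <| Matrix.toLin'.toEquiv.subtypeEquiv fun A => by simp [Matrix.charpoly_toLin']
  have hcount := card_linearEquiv_eq_card_charpoly_eq_minpoly_mul (V := Fin m → F) pb
  rw [card_linearEquiv_eq_card_GL (by simp) hK, Matrix.card_GL_field,
    Fin.prod_univ_eq_prod_range (fun i => Fintype.card F ^ m - Fintype.card F ^ i),
    Finset.range_eq_Ico, Finset.prod_eq_prod_Ico_succ_bot hm, pow_zero, zero_add, hunits,
    AdjoinRoot.minpoly_powerBasis_gen_of_monic hmonic, ← hmat] at hcount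
  have hq : 0 < Fintype.card F ^ m - 1 :=
    Nat.sub_pos_of_lt (Nat.one_lt_pow hm.ne' Fintype.one_lt_card)
  exact (Nat.eq_of_mul_eq_mul_left hq (hcount.trans (mul_comm _ _))).symm
end

section
/- Let q be a prime power and m > 1 an integer. Let S be the set of polynomials f ∈ F_q[X] that are irreducible over F_q and can be written as f(X) = ∑_{i=0}^m h_i · X^{2i} · (aX+1)^{m−i} for some a ∈ F_q and some monic polynomial h(X) = ∑_{i=0}^m h_iX^i ∈ F_q[X] of degree m. Then: 2m·|S| = q·(q^m − 1) if q is odd and m = 2^ℓ for some ℓ ≥ 1; 2m·|S| = q·∑_{d | m, d odd} μ(d)·q^{m/d} if q is odd and m = 2^ℓ·k with k ≥ 3 odd; and 2m·|S| = (q−1)·∑_{d | m, d odd} μ(d)·q^{m/d} if q is even; where μ is the Möbius function. -/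
/-!
Let `σ` be the `q`-Frobenius of an algebraic closure `K` of `F`. If `α` is a root of an
irreducible `f = g ^ m h (X ^ 2 / g)` with `g = aX + 1`, then `β = α ^ 2 / g(α)` is a root of `h`
and `α ^ 2 = aβ α + β`. Since `σ ^ d` fixes `β` for `d = deg β ≤ m`, it sends `α` to the other
root `aβ - α` of this quadratic, and as `deg α = 2m` this forces `d = m` and `σ ^ m α = aβ - α`,
i.e. `γ = α⁻¹` satisfies `γ + σ ^ m γ = -a ∈ F`. Conversely every `γ` of degree `2m` with
`γ + σ ^ m γ ∈ F` arises this way, so `2m N` is the number of such `γ`.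

Möbius inversion over the degree reduces this to counting `γ` with `σ ^ e γ = γ` and
`γ + σ ^ m γ ∈ F`, for `e ∣ 2m`. If `e ∣ m` the condition reads `2γ ∈ F`, with `q` solutions for
odd `q` and `q ^ e` for even `q`. If `e = 2f` with `m / f` odd it reads `γ + σ ^ f γ ∈ F`; the
additive separable equation `γ + γ ^ q ^ f = c` has `q ^ f` roots for each `c ∈ F`, giving
`q ^ (f + 1)`. The remaining divisors have Möbius coefficient `0`.
-/

open Polynomial
open scoped ArithmeticFunction.Moebius Pointwise

theorem Set.ncard_preimage_eq_ncard_mul {α β : Type*} (f : α → β) {s : Set β} {n : ℕ}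
    (hn : n ≠ 0) (hfin : (f ⁻¹' s).Finite) (hfib : ∀ b ∈ s, (f ⁻¹' {b}).ncard = n) :
    (f ⁻¹' s).ncard = s.ncard * n := by
  classical
  have hs : s.Finite := (hfin.image f).subset fun b hb => by
    obtain ⟨a, ha⟩ := Set.nonempty_of_ncard_ne_zero (hfib b hb ▸ hn)
    exact ⟨a, show f a ∈ s from (ha : f a = b) ▸ hb, ha⟩
  rw [ncard_eq_toFinset_card _ hfin, ncard_eq_toFinset_card _ hs,
    Finset.card_eq_sum_card_fiberwise (f := f) (t := hs.toFinset) (by intro a; simp),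
    Finset.sum_congr rfl fun b hb => ?_, Finset.sum_const, smul_eq_mul]
  rw [← hfib b (by simpa using hb), ← ncard_coe_finset]
  congr 1
  ext a
  simp_all

theorem Nat.sum_divisors_two_mul {M : Type*} [AddCommMonoid M] (m : ℕ) (g : ℕ → M) :
    ∑ d ∈ (2 * m).divisors, g d =
      ∑ c ∈ m.divisors, g (2 * c) + ∑ d ∈ m.divisors with Odd d, g d := by
  rw [← Finset.sum_filter_add_sum_filter_not _ Even]
  congr 1
  · have heven : {d ∈ (2 * m).divisors | Even d} = m.divisors.image (2 * ·) := by
      ext d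
      simp only [Finset.mem_filter, Nat.mem_divisors, Finset.mem_image]
      constructor
      · rintro ⟨⟨hd, hm⟩, c, rfl⟩
        rw [← two_mul] at hd
        exact ⟨c, ⟨Nat.dvd_of_mul_dvd_mul_left two_pos hd, by omega⟩, two_mul c⟩
      · rintro ⟨c, ⟨hc, hm⟩, rfl⟩
        exact ⟨⟨mul_dvd_mul_left 2 hc, by omega⟩, even_two_mul c⟩
    rw [heven, Finset.sum_image fun a _ b _ h => by simpa using h]
  · refine Finset.sum_congr (Finset.ext fun d => ?_) fun _ _ => rfl
    simp only [Finset.mem_filter, Nat.mem_divisors, Nat.not_even_iff_odd]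
    constructor
    · rintro ⟨⟨hd, hm⟩, hodd⟩
      exact ⟨⟨(Nat.coprime_two_right.2 hodd).dvd_of_dvd_mul_left hd, by omega⟩, hodd⟩
    · rintro ⟨⟨hd, hm⟩, hodd⟩
      exact ⟨⟨hd.mul_left 2, by omega⟩, hodd⟩

theorem Nat.filter_odd_divisors_two_pow_mul {k : ℕ} (hk : Odd k) (ℓ : ℕ) :
    {d ∈ (2 ^ ℓ * k).divisors | Odd d} = k.divisors := by
  ext d
  simp only [Finset.mem_filter, Nat.mem_divisors]
  constructor
  · rintro ⟨⟨hd, -⟩, hodd⟩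
    exact ⟨((Nat.coprime_two_right.2 hodd).pow_right ℓ).dvd_of_dvd_mul_left hd, hk.pos.ne'⟩
  · rintro ⟨hd, -⟩
    exact ⟨⟨hd.mul_left _, mul_ne_zero (by positivity) hk.pos.ne'⟩, hk.of_dvd_nat hd⟩

namespace ArithmeticFunction

theorem sum_divisors_moebius_eq_zero {k : ℕ} (hk : k ≠ 1) : ∑ d ∈ k.divisors, μ d = 0 := by
  have h := DFunLike.congr_fun moebius_mul_coe_zeta k
  rwa [coe_mul_zeta_apply, one_apply_ne hk] at h

theorem sum_divisors_moebius_two_mul (m : ℕ) (G : ℕ → ℤ) :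
    ∑ c ∈ m.divisors, μ (2 * c) * G c = -∑ c ∈ m.divisors with Odd c, μ c * G c := by
  rw [← Finset.sum_filter_add_sum_filter_not _ Odd, ← Finset.sum_neg_distrib]
  have hodd : ∀ c, Odd c → μ (2 * c) = -μ c := fun c hc => by
    rw [isMultiplicative_moebius.map_mul_of_coprime (Nat.coprime_two_left.2 hc),
      moebius_apply_prime Nat.prime_two, neg_one_mul]
  have heven : ∀ c, ¬Odd c → μ (2 * c) = 0 := fun c hc => by
    obtain ⟨c, rfl⟩ := Nat.not_odd_iff_even.1 hc
    refine moebius_eq_zero_of_not_squarefree fun h => ?_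
    exact Nat.isUnit_iff.not.2 (by decide) (h 2 ⟨c, by ring⟩)
  have hzero : ∑ c ∈ m.divisors with ¬Odd c, μ (2 * c) * G c = 0 :=
    Finset.sum_eq_zero fun c hc => by rw [heven c (Finset.mem_filter.1 hc).2, zero_mul]
  rw [hzero, add_zero]
  exact Finset.sum_congr rfl fun c hc => by rw [hodd c (Finset.mem_filter.1 hc).2, neg_mul]

end ArithmeticFunction

namespace Polynomial

variable {R : Type*} [CommRing R]

/-- `g ^ m * h (X ^ 2 / g)`, for `h` of degree at most `m`. -/
noncomputable def quadTransform (m : ℕ) (g h : R[X]) : R[X] :=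
  ∑ i ∈ Finset.range (m + 1), C (h.coeff i) * X ^ (2 * i) * g ^ (m - i)

theorem degree_quadTransform_sub_X_pow_lt [Nontrivial R] {m : ℕ} {g h : R[X]}
    (hg : g.natDegree ≤ 1) (hh : h.Monic) (hdeg : h.natDegree = m) :
    (quadTransform m g h - X ^ (2 * m)).degree < ↑(2 * m) := by
  have htop : h.coeff m = 1 := hdeg ▸ hh.coeff_natDegree
  rw [quadTransform, Finset.sum_range_succ, htop, map_one, one_mul, Nat.sub_self, pow_zero,
    mul_one, add_sub_cancel_right]
  refine (degree_sum_le _ _).trans_lt ((Finset.sup_lt_iff (WithBot.bot_lt_coe _)).2 fun i hi => ?_)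
  refine degree_le_natDegree.trans_lt (WithBot.coe_lt_coe.2 ?_)
  have hi := Finset.mem_range.1 hi
  calc (C (h.coeff i) * X ^ (2 * i) * g ^ (m - i)).natDegree
      ≤ 2 * i + (m - i) * 1 :=
        natDegree_mul_le_of_le (natDegree_C_mul_X_pow_le _ _) (natDegree_pow_le_of_le _ hg)
    _ < 2 * m := by omega

theorem monic_quadTransform [Nontrivial R] {m : ℕ} {g h : R[X]} (hg : g.natDegree ≤ 1)
    (hh : h.Monic) (hdeg : h.natDegree = m) : (quadTransform m g h).Monic := by
  have := (monic_X_pow (R := R) (2 * m)).add_of_left (q := quadTransform m g h - X ^ (2 * m))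
    (by rw [degree_X_pow]; exact degree_quadTransform_sub_X_pow_lt hg hh hdeg)
  rwa [add_sub_cancel] at this

theorem natDegree_quadTransform [Nontrivial R] {m : ℕ} {g h : R[X]} (hg : g.natDegree ≤ 1)
    (hh : h.Monic) (hdeg : h.natDegree = m) : (quadTransform m g h).natDegree = 2 * m := by
  rw [← add_sub_cancel (X ^ (2 * m)) (quadTransform m g h),
    natDegree_add_eq_left_of_degree_lt, natDegree_X_pow]
  rw [degree_X_pow]
  exact degree_quadTransform_sub_X_pow_lt hg hh hdeg

theorem aeval_quadTransform {A : Type*} [CommRing A] [Algebra R A] {m : ℕ} {g h : R[X]}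
    (hdeg : h.natDegree ≤ m) {α β : A} (hαβ : aeval α g * β = α ^ 2) :
    aeval α (quadTransform m g h) = aeval α g ^ m * aeval β h := by
  rw [aeval_eq_sum_range' (Nat.lt_succ_of_le hdeg), quadTransform, map_sum, Finset.mul_sum]
  refine Finset.sum_congr rfl fun i hi => ?_
  have hi := Nat.lt_succ_iff.1 (Finset.mem_range.1 hi)
  rw [map_mul, map_mul, map_pow, map_pow, aeval_C, aeval_X, pow_mul, ← hαβ, Algebra.smul_def,
    ← pow_mul_pow_sub _ hi]
  ring

end Polynomial

namespace FiniteField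

variable {F : Type*} [Field F] [Fintype F] {K : Type*} [Field K] [Algebra F K]

local notation "q" => Fintype.card F

theorem frobeniusAlgHom_pow_apply (n : ℕ) (x : K) : (frobeniusAlgHom F K ^ n) x = x ^ q ^ n := by
  rw [AlgHom.coe_pow, coe_frobeniusAlgHom, pow_iterate]

theorem algebraMap_pow_card_pow (n : ℕ) (a : F) :
    algebraMap F K a ^ q ^ n = algebraMap F K a := by
  rw [← map_pow, pow_card_pow]

theorem pow_card_pow_eq_self_iff {x : K} (hx : IsIntegral F x) (n : ℕ) :
    x ^ q ^ n = x ↔ (minpoly F x).natDegree ∣ n := by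
  rw [(minpoly.irreducible hx).natDegree_dvd_iff_dvd_X_pow_card_pow_sub_X, minpoly.dvd_iff,
    Nat.card_eq_fintype_card]
  simp [sub_eq_zero]

theorem pow_card_pow_eq_sub_of_sq_eq {α u β : K} {d : ℕ} (hα : α ^ 2 = u * α + β)
    (hu : u ^ q ^ d = u) (hβ : β ^ q ^ d = β) (hne : α ^ q ^ d ≠ α) :
    α ^ q ^ d = u - α := by
  have h := congrArg (frobeniusAlgHom F K ^ d) hα
  simp only [map_add, map_mul, map_pow, frobeniusAlgHom_pow_apply, hu, hβ] at h
  have : (α ^ q ^ d - α) * (α ^ q ^ d - (u - α)) = 0 := by linear_combination h - hα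
  exact sub_eq_zero.1 ((mul_eq_zero.1 this).resolve_left (sub_ne_zero.2 hne))

variable (F K) in
/-- The `γ` whose trace `γ + γ ^ q ^ m` from `𝔽_{q^{2m}}` down to `𝔽_{q^m}` lies in `F`. -/
def traceMemBase (m : ℕ) : Set K := (fun γ => γ + γ ^ q ^ m) ⁻¹' Set.range (algebraMap F K)

theorem pow_card_pow_two_mul_eq_self_of_mem_traceMemBase {f : ℕ} {x : K}
    (hx : x ∈ traceMemBase F K f) : x ^ q ^ (2 * f) = x := by
  obtain ⟨b, hb⟩ := hx
  have hσ := eq_sub_of_add_eq' hb.symm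
  have h := congrArg (frobeniusAlgHom F K ^ f) hσ
  simp only [map_sub, AlgHom.commutes, frobeniusAlgHom_pow_apply] at h
  rw [two_mul, pow_add, pow_mul, h, hσ, sub_sub_cancel]

section AlgClosed

variable [IsAlgClosed K]

theorem ncard_setOf_pow_card_pow_add_mul_eq {n : ℕ} (hn : n ≠ 0) {u : K} (hu : u ≠ 0) (c : K) :
    {x : K | x ^ q ^ n + u * x = c}.ncard = q ^ n := by
  set p : K[X] := X ^ q ^ n + (C u * X - C c)
  have hq : 1 < q ^ n := Nat.one_lt_pow hn Fintype.one_lt_card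
  have hlow : (C u * X - C c).natDegree < q ^ n := by
    refine lt_of_le_of_lt (natDegree_sub_le _ _) ?_
    simp only [natDegree_C, natDegree_C_mul_X u hu]
    omega
  have hdeg : p.natDegree = q ^ n := by
    rw [natDegree_add_eq_left_of_natDegree_lt (by rwa [natDegree_X_pow]), natDegree_X_pow]
  have hsep : p.Separable := by
    have hqK : (q : K) = 0 := by
      rw [← map_natCast (algebraMap F K), cast_card_eq_zero, map_zero]
    rw [separable_def, show derivative p = C u by simp [p, derivative_X_pow, hqK, hn]]
    exact ⟨0, C u⁻¹, by rw [zero_mul, zero_add, ← C_mul, inv_mul_cancel₀ hu, C_1]⟩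
  have hp0 : p ≠ 0 := ne_zero_of_natDegree_gt (hdeg ▸ hq)
  have hroots : {x : K | x ^ q ^ n + u * x = c} = p.rootSet K := by
    ext x
    rw [mem_rootSet, and_iff_right hp0]
    simp [p, ← add_sub_assoc, sub_eq_zero]
  rw [hroots, ← Nat.card_coe_set_eq, Nat.card_eq_fintype_card,
    card_rootSet_eq_natDegree hsep (IsAlgClosed.splits _), hdeg]

theorem ncard_setOf_pow_card_pow_eq_self {n : ℕ} (hn : n ≠ 0) :
    {x : K | x ^ q ^ n = x}.ncard = q ^ n := by
  simpa [← sub_eq_add_neg, sub_eq_zero] using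
    ncard_setOf_pow_card_pow_add_mul_eq (K := K) hn (neg_ne_zero.2 one_ne_zero) 0

theorem finite_setOf_pow_card_pow_eq_self {n : ℕ} (hn : n ≠ 0) :
    {x : K | x ^ q ^ n = x}.Finite :=
  Set.finite_of_ncard_ne_zero (by rw [ncard_setOf_pow_card_pow_eq_self hn]; positivity)

theorem ncard_traceMemBase {f : ℕ} (hf : f ≠ 0) : (traceMemBase F K f).ncard = q ^ (f + 1) := by
  have hfib (c : K) (_ : c ∈ Set.range (algebraMap F K)) :
      ((fun x : K => x + x ^ q ^ f) ⁻¹' {c}).ncard = q ^ f := by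
    have : (fun x : K => x + x ^ q ^ f) ⁻¹' {c} = {x | x ^ q ^ f + 1 * x = c} := by
      ext; simp [add_comm]
    rw [this, ncard_setOf_pow_card_pow_add_mul_eq hf one_ne_zero]
  have hfin : (traceMemBase F K f).Finite :=
    (finite_setOf_pow_card_pow_eq_self (by omega : 2 * f ≠ 0)).subset
      fun _ => pow_card_pow_two_mul_eq_self_of_mem_traceMemBase
  rw [traceMemBase, Set.ncard_preimage_eq_ncard_mul _ (by positivity) hfin hfib,
    Set.ncard_range_of_injective (algebraMap F K).injective, Nat.card_eq_fintype_card, pow_succ,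
    mul_comm]

end AlgClosed

section Algebraic

variable [Algebra.IsAlgebraic F K]

theorem natDegree_minpoly_inv (x : K) : (minpoly F x⁻¹).natDegree = (minpoly F x).natDegree := by
  have key (n : ℕ) : (minpoly F x⁻¹).natDegree ∣ n ↔ (minpoly F x).natDegree ∣ n := by
    rw [← pow_card_pow_eq_self_iff (Algebra.IsIntegral.isIntegral _),
      ← pow_card_pow_eq_self_iff (Algebra.IsIntegral.isIntegral _), inv_pow, inv_inj]
  exact Nat.dvd_antisymm ((key _).2 dvd_rfl) ((key _).1 dvd_rfl)

theorem natDegree_minpoly_eq_of_sq_eq {m : ℕ} {α u β : K}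
    (hdeg : (minpoly F α).natDegree = 2 * m) (hα : α ^ 2 = u * α + β)
    (hu : u ^ q ^ (minpoly F β).natDegree = u) (hdm : (minpoly F β).natDegree ≤ m) :
    (minpoly F β).natDegree = m ∧ α ^ q ^ m = u - α := by
  have hintα := Algebra.IsIntegral.isIntegral (R := F) α
  have hintβ := Algebra.IsIntegral.isIntegral (R := F) β
  set d := (minpoly F β).natDegree
  have hd0 : 0 < d := minpoly.natDegree_pos hintβ
  have hβd : β ^ q ^ d = β := (pow_card_pow_eq_self_iff hintβ d).2 dvd_rfl
  have hσ : α ^ q ^ d = u - α := by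
    refine pow_card_pow_eq_sub_of_sq_eq hα hu hβd fun h => ?_
    have := Nat.le_of_dvd hd0 (hdeg ▸ (pow_card_pow_eq_self_iff hintα d).1 h)
    omega
  have h2d : α ^ q ^ (2 * d) = α := by
    have h := congrArg (frobeniusAlgHom F K ^ d) hσ
    simp only [map_sub, frobeniusAlgHom_pow_apply, hu] at h
    rw [two_mul, pow_add, pow_mul, h, hσ, sub_sub_cancel]
  have hdm' : d = m := by
    have := hdeg ▸ (pow_card_pow_eq_self_iff hintα _).1 h2d
    exact le_antisymm hdm (Nat.le_of_dvd hd0 (Nat.dvd_of_mul_dvd_mul_left two_pos this))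
  exact ⟨hdm', hdm' ▸ hσ⟩

theorem inv_mem_traceMemBase_of_minpoly_eq {m : ℕ} {α : K} {a : F} {h : F[X]}
    (hh : h.Monic) (hdeg : h.natDegree = m)
    (hα : minpoly F α = quadTransform m (C a * X + 1) h) : α⁻¹ ∈ traceMemBase F K m := by
  have hdegα : (minpoly F α).natDegree = 2 * m :=
    hα ▸ natDegree_quadTransform (by compute_degree) hh hdeg
  have hbase : α ∉ Set.range (algebraMap F K) := fun h =>
    absurd (minpoly.natDegree_eq_one_iff.2 h) (by omega)
  have hα0 : α ≠ 0 := fun h0 => hbase ⟨0, by rw [h0, map_zero]⟩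
  have hG : algebraMap F K a * α + 1 ≠ 0 := fun hG => by
    have ha : algebraMap F K a ≠ 0 := fun ha => by simp [ha] at hG
    exact hbase ⟨-a⁻¹, by rw [map_neg, map_inv₀]; field_simp; linear_combination -hG⟩
  set β := α ^ 2 / (algebraMap F K a * α + 1)
  have hGβ : (algebraMap F K a * α + 1) * β = α ^ 2 := mul_div_cancel₀ _ hG
  clear_value β
  have hβroot : aeval β h = 0 := by
    have := aeval_quadTransform (g := C a * X + 1) hdeg.le (α := α) (β := β) (by simpa using hGβ)
    rw [← hα, minpoly.aeval] at this
    simpa [hG] using this.symm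
  have hβd : β ^ q ^ (minpoly F β).natDegree = β :=
    (pow_card_pow_eq_self_iff (Algebra.IsIntegral.isIntegral β) _).2 dvd_rfl
  obtain ⟨-, hσ⟩ := natDegree_minpoly_eq_of_sq_eq hdegα (u := algebraMap F K a * β) (β := β)
    (by linear_combination -hGβ)
    (by rw [mul_pow, algebraMap_pow_card_pow, hβd])
    (hdeg ▸ natDegree_le_of_dvd (minpoly.dvd F β hβroot) hh.ne_zero)
  have hσ0 : algebraMap F K a * β - α ≠ 0 := hσ ▸ pow_ne_zero _ hα0
  refine ⟨-a, show _ = α⁻¹ + α⁻¹ ^ q ^ m from ?_⟩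
  rw [inv_pow, hσ, map_neg]
  field_simp
  linear_combination (-algebraMap F K a) * hGβ

theorem exists_minpoly_eq_quadTransform {m : ℕ} {α : K}
    (hdeg : (minpoly F α).natDegree = 2 * m) (hα : α⁻¹ ∈ traceMemBase F K m) :
    ∃ (a : F) (h : F[X]), h.Monic ∧ h.natDegree = m ∧
      minpoly F α = quadTransform m (C a * X + 1) h := by
  have hintα := Algebra.IsIntegral.isIntegral (R := F) α
  have hα0 : α ≠ 0 := fun h0 => by
    rw [h0, minpoly.zero, natDegree_X] at hdeg
    omega
  obtain ⟨b, hb⟩ := hα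
  have h2m : α ^ q ^ (2 * m) = α := (pow_card_pow_eq_self_iff hintα _).2 hdeg.dvd
  have hσσ : (α ^ q ^ m) ^ q ^ m = α := by rw [← pow_mul, ← pow_add, ← two_mul, h2m]
  set β := -(α * α ^ q ^ m) with hβ_def
  have hintβ := Algebra.IsIntegral.isIntegral (R := F) β
  have hβm : β ^ q ^ m = β := by
    rw [← frobeniusAlgHom_pow_apply (F := F), map_neg, map_mul, frobeniusAlgHom_pow_apply,
      frobeniusAlgHom_pow_apply, hσσ, mul_comm]
  have hsum : α + α ^ q ^ m = algebraMap F K (-b) * β := by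
    have hb' : algebraMap F K b = α⁻¹ + (α ^ q ^ m)⁻¹ := by simpa only [inv_pow] using hb
    rw [map_neg, hb']
    field_simp
    ring
  have hm0 : 0 < m := by have := minpoly.natDegree_pos hintα; omega
  obtain ⟨hdm, -⟩ := natDegree_minpoly_eq_of_sq_eq hdeg (u := α + α ^ q ^ m) (β := β)
    (by rw [hβ_def]; ring)
    (by rw [hsum, mul_pow, algebraMap_pow_card_pow, (pow_card_pow_eq_self_iff hintβ _).2 dvd_rfl])
    (Nat.le_of_dvd hm0 ((pow_card_pow_eq_self_iff hintβ m).1 hβm))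
  have hmonic :=
    monic_quadTransform (g := C (-b) * X + 1) (by compute_degree) (minpoly.monic hintβ) hdm
  have hroot : aeval α (quadTransform m (C (-b) * X + 1) (minpoly F β)) = 0 := by
    rw [aeval_quadTransform hdm.le (β := β) (by
      simp only [map_add, map_mul, aeval_C, aeval_X, map_one]
      linear_combination -α * hsum + hβ_def), minpoly.aeval, mul_zero]
  refine ⟨-b, minpoly F β, minpoly.monic hintβ, hdm, ?_⟩
  refine (eq_of_monic_of_dvd_of_natDegree_le (minpoly.monic hintα) hmonic
    (minpoly.dvd F α hroot) ?_).symm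
  rw [natDegree_quadTransform (by compute_degree) (minpoly.monic hintβ) hdm, hdeg]

theorem fixedPoints_inter_traceMemBase_of_dvd {e m : ℕ} (hem : e ∣ m) :
    {x : K | x ^ q ^ e = x} ∩ traceMemBase F K m =
      {x : K | x ^ q ^ e = x ∧ 2 * x ∈ Set.range (algebraMap F K)} := by
  ext x
  simp only [traceMemBase, Set.mem_inter_iff, Set.mem_preimage, Set.mem_ofPred_eq]
  refine and_congr_right fun hx => ?_
  have hint := Algebra.IsIntegral.isIntegral (R := F) x
  rw [(pow_card_pow_eq_self_iff hint m).2 (((pow_card_pow_eq_self_iff hint e).1 hx).trans hem),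
    two_mul]

theorem fixedPoints_inter_traceMemBase_mul_odd {f k : ℕ} (hk : Odd k) :
    {x : K | x ^ q ^ (2 * f) = x} ∩ traceMemBase F K (f * k) = traceMemBase F K f := by
  have hpow {x : K} (hx : x ^ q ^ (2 * f) = x) : x ^ q ^ (f * k) = x ^ q ^ f := by
    obtain ⟨j, rfl⟩ := hk
    have hint := Algebra.IsIntegral.isIntegral (R := F) x
    have h2fj : x ^ q ^ (2 * f * j) = x :=
      (pow_card_pow_eq_self_iff hint _).2 (((pow_card_pow_eq_self_iff hint _).1 hx).mul_right j)
    rw [show f * (2 * j + 1) = 2 * f * j + f by ring, pow_add, pow_mul, h2fj]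
  ext x
  simp only [traceMemBase, Set.mem_inter_iff, Set.mem_preimage, Set.mem_ofPred_eq]
  constructor
  · rintro ⟨hx, hT⟩
    rwa [hpow hx] at hT
  · intro hx
    have hfix := pow_card_pow_two_mul_eq_self_of_mem_traceMemBase (F := F) hx
    exact ⟨hfix, by rwa [hpow hfix]⟩

theorem ncard_fixedPoints_inter_traceMemBase_of_odd {e m : ℕ} (hem : e ∣ m) (hq : Odd q) :
    ({x : K | x ^ q ^ e = x} ∩ traceMemBase F K m).ncard = q := by
  have h2 : (2 : K) ≠ 0 := by
    rw [← map_ofNat (algebraMap F K)]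
    refine (_root_.map_ne_zero _).2 (Ring.two_ne_zero fun h => ?_)
    rw [FiniteField.even_card_iff_char_two, ← Nat.even_iff] at h
    exact Nat.not_even_iff_odd.2 hq h
  have hrange : {x : K | x ^ q ^ e = x ∧ 2 * x ∈ Set.range (algebraMap F K)} =
      Set.range (algebraMap F K) := by
    ext x
    constructor
    · rintro ⟨-, b, hb⟩
      refine ⟨b / 2, ?_⟩
      rw [map_div₀, hb, map_ofNat, mul_div_cancel_left₀ _ h2]
    · rintro ⟨b, rfl⟩
      exact ⟨algebraMap_pow_card_pow e b, 2 * b, by rw [map_mul, map_ofNat]⟩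
  rw [fixedPoints_inter_traceMemBase_of_dvd hem, hrange,
    Set.ncard_range_of_injective (algebraMap F K).injective, Nat.card_eq_fintype_card]

variable [IsAlgClosed K]

theorem ncard_fixedPoints_inter_traceMemBase_of_even {e m : ℕ} (he : e ≠ 0) (hem : e ∣ m)
    (hq : Even q) : ({x : K | x ^ q ^ e = x} ∩ traceMemBase F K m).ncard = q ^ e := by
  have h2 : (2 : K) = 0 := by
    have := ringChar.Nat.cast_ringChar (R := F)
    rw [FiniteField.even_card_iff_char_two.2 (Nat.even_iff.1 hq), Nat.cast_ofNat] at this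
    rw [← map_ofNat (algebraMap F K), this, map_zero]
  have hall : {x : K | x ^ q ^ e = x ∧ 2 * x ∈ Set.range (algebraMap F K)} =
      {x : K | x ^ q ^ e = x} := by
    ext x
    simp [h2]
  rw [fixedPoints_inter_traceMemBase_of_dvd hem, hall, ncard_setOf_pow_card_pow_eq_self he]

theorem ncard_fixedPoints_inter_eq_sum (s : Set K) {n : ℕ} (hn : n ≠ 0) :
    ({x : K | x ^ q ^ n = x} ∩ s).ncard =
      ∑ d ∈ n.divisors, ({x : K | (minpoly F x).natDegree = d} ∩ s).ncard := by
  classical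
  have hfin := (finite_setOf_pow_card_pow_eq_self (F := F) (K := K) hn).inter_of_left s
  have hmem (x : K) : x ^ q ^ n = x ↔ (minpoly F x).natDegree ∈ n.divisors := by
    rw [pow_card_pow_eq_self_iff (Algebra.IsIntegral.isIntegral x), Nat.mem_divisors,
      and_iff_left hn]
  rw [Set.ncard_eq_toFinset_card _ hfin, Finset.card_eq_sum_card_fiberwise
    (f := fun x => (minpoly F x).natDegree) (t := n.divisors) fun x hx =>
      Finset.mem_coe.2 ((hmem x).1 (hfin.mem_toFinset.1 hx).1)]
  refine Finset.sum_congr rfl fun d hd => ?_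
  rw [← Set.ncard_coe_finset]
  congr 1
  ext x
  simp only [Finset.coe_filter, Set.Finite.mem_toFinset, Set.mem_inter_iff, Set.mem_ofPred_eq]
  constructor
  · rintro ⟨⟨-, hs⟩, rfl⟩
    exact ⟨rfl, hs⟩
  · rintro ⟨rfl, hs⟩
    exact ⟨⟨(hmem x).2 hd, hs⟩, rfl⟩

theorem ncard_natDegree_minpoly_inter_eq_sum_moebius (s : Set K) {n : ℕ} (hn : n ≠ 0) :
    (({x : K | (minpoly F x).natDegree = n} ∩ s).ncard : ℤ) =
      ∑ d ∈ n.divisors, μ d * ({x : K | x ^ q ^ (n / d) = x} ∩ s).ncard := by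
  rw [← Nat.sum_divisorsAntidiagonal fun d e => μ d * (({x : K | x ^ q ^ e = x} ∩ s).ncard : ℤ)]
  have hsum : ∀ e > 0, ∑ d ∈ e.divisors,
      (({x : K | (minpoly F x).natDegree = d} ∩ s).ncard : ℤ) =
        ({x : K | x ^ q ^ e = x} ∩ s).ncard := fun e he => by
    exact_mod_cast (ncard_fixedPoints_inter_eq_sum s he.ne').symm
  have key := ArithmeticFunction.sum_eq_iff_sum_smul_moebius_eq.1 hsum n (Nat.pos_of_ne_zero hn)
  simpa only [smul_eq_mul] using key.symm

theorem ncard_natDegree_two_mul_inter_traceMemBase {m : ℕ} (hm : m ≠ 0) :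
    (({x : K | (minpoly F x).natDegree = 2 * m} ∩ traceMemBase F K m).ncard : ℤ) =
      q * ∑ d ∈ m.divisors with Odd d, μ d * (q : ℤ) ^ (m / d) -
        ∑ c ∈ m.divisors with Odd c,
          μ c * ({x : K | x ^ q ^ (m / c) = x} ∩ traceMemBase F K m).ncard := by
  rw [ncard_natDegree_minpoly_inter_eq_sum_moebius _ (by omega), Nat.sum_divisors_two_mul,
    add_comm, sub_eq_add_neg]
  congr 1
  · rw [Finset.mul_sum]
    refine Finset.sum_congr rfl fun d hd => ?_
    obtain ⟨⟨hdm, -⟩, hodd⟩ := by simpa only [Finset.mem_filter, Nat.mem_divisors] using hd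
    have hset := fixedPoints_inter_traceMemBase_mul_odd (F := F) (K := K) (f := m / d) hodd
    rw [Nat.div_mul_cancel hdm] at hset
    rw [Nat.mul_div_assoc _ hdm, hset,
      ncard_traceMemBase (Nat.div_ne_zero_iff_of_dvd hdm |>.2 ⟨hm, hodd.pos.ne'⟩)]
    push_cast
    ring
  · simp_rw [Nat.mul_div_mul_left _ _ two_pos]
    exact ArithmeticFunction.sum_divisors_moebius_two_mul m _

theorem ncard_natDegree_two_mul_inter_traceMemBase_of_even {m : ℕ} (hm : m ≠ 0) (hq : Even q) :
    (({x : K | (minpoly F x).natDegree = 2 * m} ∩ traceMemBase F K m).ncard : ℤ) =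
      (q - 1) * ∑ d ∈ m.divisors with Odd d, μ d * (q : ℤ) ^ (m / d) := by
  rw [ncard_natDegree_two_mul_inter_traceMemBase hm, sub_mul, one_mul]
  congr 1
  refine Finset.sum_congr rfl fun c hc => ?_
  obtain ⟨⟨hcm, -⟩, hodd⟩ := by simpa only [Finset.mem_filter, Nat.mem_divisors] using hc
  rw [ncard_fixedPoints_inter_traceMemBase_of_even
    (Nat.div_ne_zero_iff_of_dvd hcm |>.2 ⟨hm, hodd.pos.ne'⟩) (Nat.div_dvd_of_dvd hcm) hq]
  push_cast
  ring

theorem ncard_natDegree_two_mul_inter_traceMemBase_of_odd {m : ℕ} (hm : m ≠ 0) (hq : Odd q) :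
    (({x : K | (minpoly F x).natDegree = 2 * m} ∩ traceMemBase F K m).ncard : ℤ) =
      q * (∑ d ∈ m.divisors with Odd d, μ d * (q : ℤ) ^ (m / d) -
        ∑ c ∈ m.divisors with Odd c, μ c) := by
  rw [ncard_natDegree_two_mul_inter_traceMemBase hm, mul_sub]
  congr 1
  rw [Finset.mul_sum]
  refine Finset.sum_congr rfl fun c hc => ?_
  obtain ⟨⟨hcm, -⟩, -⟩ := by simpa only [Finset.mem_filter, Nat.mem_divisors] using hc
  rw [ncard_fixedPoints_inter_traceMemBase_of_odd (Nat.div_dvd_of_dvd hcm) hq, mul_comm]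

theorem ncard_setOf_irreducible_quadTransform_mul {m : ℕ} (hm : m ≠ 0) :
    {f : F[X] | Irreducible f ∧ ∃ (a : F) (h : F[X]), h.Monic ∧ h.natDegree = m ∧
        f = quadTransform m (C a * X + 1) h}.ncard * (2 * m) =
      ({x : K | (minpoly F x).natDegree = 2 * m} ∩ traceMemBase F K m).ncard := by
  set S := {f : F[X] | Irreducible f ∧ ∃ (a : F) (h : F[X]), h.Monic ∧ h.natDegree = m ∧
    f = quadTransform m (C a * X + 1) h}
  have hpre : minpoly F ⁻¹' S =
      ({x : K | (minpoly F x).natDegree = 2 * m} ∩ traceMemBase F K m)⁻¹ := by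
    ext α
    simp only [S, Set.mem_preimage, Set.mem_inv, Set.mem_inter_iff, Set.mem_ofPred_eq,
      natDegree_minpoly_inv]
    constructor
    · rintro ⟨-, a, h, hh, hdeg, hα⟩
      exact ⟨hα ▸ natDegree_quadTransform (by compute_degree) hh hdeg,
        inv_mem_traceMemBase_of_minpoly_eq hh hdeg hα⟩
    · rintro ⟨hdeg, hα⟩
      exact ⟨minpoly.irreducible (Algebra.IsIntegral.isIntegral α),
        exists_minpoly_eq_quadTransform hdeg hα⟩
  have hfib : ∀ f ∈ S, (minpoly F ⁻¹' {f} : Set K).ncard = 2 * m := by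
    rintro f ⟨hirr, a, h, hh, hdeg, rfl⟩
    have hmonic := monic_quadTransform (by compute_degree) hh hdeg (g := C a * X + 1)
    have hroots : (minpoly F ⁻¹' {quadTransform m (C a * X + 1) h} : Set K) =
        (quadTransform m (C a * X + 1) h).rootSet K := by
      ext α
      rw [Set.mem_preimage, Set.mem_singleton_iff, mem_rootSet, and_iff_right hmonic.ne_zero]
      exact ⟨fun hα => hα ▸ minpoly.aeval F α,
        fun hα => (minpoly.eq_of_irreducible_of_monic hirr hα hmonic).symm⟩
    rw [hroots, ← Nat.card_coe_set_eq, Nat.card_eq_fintype_card,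
      card_rootSet_eq_natDegree (PerfectField.separable_of_irreducible hirr) (IsAlgClosed.splits _),
      natDegree_quadTransform (by compute_degree) hh hdeg]
  have hfin : (minpoly F ⁻¹' S : Set K).Finite := by
    refine (finite_setOf_pow_card_pow_eq_self (F := F) (K := K) (by omega : 2 * m ≠ 0)).subset ?_
    intro α hα
    rw [hpre, Set.mem_inv, Set.mem_inter_iff, Set.mem_ofPred_eq, natDegree_minpoly_inv] at hα
    exact (pow_card_pow_eq_self_iff (Algebra.IsIntegral.isIntegral α) _).2 hα.1.dvd
  rw [← Set.ncard_preimage_eq_ncard_mul _ (by omega) hfin hfib, hpre, Set.ncard_inv]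

end Algebraic

end FiniteField

open FiniteField in
/-- The count of irreducible polynomials over `F_q` of the form
`(aX+1)^m h(X²/(aX+1)) = ∑ h_i X^{2i} (aX+1)^{m-i}` with `a ∈ F_q` and `h`
monic of degree `m > 1`. If `S` is the set of such irreducible polynomials and
`N = |S|`, then `2mN = q(q^m - 1)` if `q` is odd and `m = 2^ℓ`;
`2mN = q ∑_{d ∣ m, d odd} μ(d) q^{m/d}` if `q` is odd and `m = 2^ℓ k` with
`k ≥ 3` odd; and `2mN = (q-1) ∑_{d ∣ m, d odd} μ(d) q^{m/d}` if `q` is even. -/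
theorem stmt10 (F : Type) [Field F] [Fintype F] (m : ℕ) (hm : 1 < m)
    (N : ℕ)
    (hN : N = Nat.card {f : Polynomial F //
      Irreducible f ∧
        ∃ (a : F) (h : Polynomial F), h.Monic ∧ h.natDegree = m ∧
          f = ∑ i ∈ Finset.range (m + 1),
            Polynomial.C (h.coeff i) * Polynomial.X ^ (2 * i) *
              (Polynomial.C a * Polynomial.X + 1) ^ (m - i)}) :
    (Odd (Fintype.card F) → (∃ ℓ : ℕ, 1 ≤ ℓ ∧ m = 2 ^ ℓ) →
      (2 * m : ℤ) * N = (Fintype.card F : ℤ) * ((Fintype.card F : ℤ) ^ m - 1)) ∧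
    (Odd (Fintype.card F) → (∃ ℓ k : ℕ, Odd k ∧ 3 ≤ k ∧ m = 2 ^ ℓ * k) →
      (2 * m : ℤ) * N = (Fintype.card F : ℤ) *
        ∑ d ∈ m.divisors.filter (fun d => Odd d),
          ArithmeticFunction.moebius d * (Fintype.card F : ℤ) ^ (m / d)) ∧
    (Even (Fintype.card F) →
      (2 * m : ℤ) * N = ((Fintype.card F : ℤ) - 1) *
        ∑ d ∈ m.divisors.filter (fun d => Odd d),
          ArithmeticFunction.moebius d * (Fintype.card F : ℤ) ^ (m / d)) := by
  have hm0 : m ≠ 0 := by omega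
  have hkey : (2 * m : ℤ) * N = (({x : AlgebraicClosure F | (minpoly F x).natDegree = 2 * m} ∩
      traceMemBase F (AlgebraicClosure F) m).ncard : ℤ) := by
    rw [← ncard_setOf_irreducible_quadTransform_mul hm0, hN, ← Nat.card_coe_set_eq]
    push_cast
    exact mul_comm _ _
  refine ⟨fun hq ⟨ℓ, _, hmℓ⟩ => ?_, fun hq ⟨ℓ, k, hk, hk3, hmk⟩ => ?_, fun hq => ?_⟩
  · have hodd : {d ∈ m.divisors | Odd d} = {1} := by
      rw [hmℓ, ← mul_one (2 ^ ℓ), Nat.filter_odd_divisors_two_pow_mul odd_one, Nat.divisors_one]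
    rw [hkey, ncard_natDegree_two_mul_inter_traceMemBase_of_odd hm0 hq, hodd,
      Finset.sum_singleton, Finset.sum_singleton, ArithmeticFunction.moebius_apply_one, Nat.div_one]
    ring
  · have hodd : {d ∈ m.divisors | Odd d} = k.divisors := by
      rw [hmk, Nat.filter_odd_divisors_two_pow_mul hk ℓ]
    rw [hkey, ncard_natDegree_two_mul_inter_traceMemBase_of_odd hm0 hq, hodd,
      ArithmeticFunction.sum_divisors_moebius_eq_zero (by omega), sub_zero]
  · rw [hkey, ncard_natDegree_two_mul_inter_traceMemBase_of_even hm0 hq]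
end

section
/- Let q be a prime power and m, n positive integers. Let g ∈ F_q[X] satisfy g(0) = 1 and deg g ≤ n−1, let h(X) = ∑_{i=0}^m h_iX^i ∈ F_q[X] be monic of degree m with h(0) ≠ 0, and set f(X) = ∑_{i=0}^m h_i · X^{n·i} · g(X)^{m−i}. Then f is monic of degree mn with f(0) = h(0), and h(0)^{−1}·reflect_{mn}(f) = (h(0)^{−1}·reflect_m(h)) ∘ (X·reflect_{n−1}(g)), i.e., the monic reciprocal of f equals the composition of the monic reciprocal of h with the polynomial X^n·g(1/X) = X·reflect_{n−1}(g). -/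
/-!
Put `G = X ^ n g(1/X) = reflect n g`. Reflection is additive and multiplicative on factors of
bounded degree, so `reflect (m * n)` sends the summand `h_i X^{ni} g^{m-i}` of `f` to
`h_i G^{m-i}`, which is the `i`-th term of `(reflect m h).comp G`. Since `deg g < n`, every
summand with `i < m` has degree `< mn`, so `f` is `X^{mn}` plus lower terms, and at `0` only
the summand `h_0 g^m` survives.
-/

open Polynomial Finset

namespace Polynomial

variable {R : Type*}

section Semiring

variable [Semiring R]

theorem reflect_sum {ι : Type*} (s : Finset ι) (p : ι → R[X]) (N : ℕ) :
    reflect N (∑ i ∈ s, p i) = ∑ i ∈ s, reflect N (p i) := by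
  ext j
  simp only [coeff_reflect, finsetSum_coeff]

theorem reflect_succ_of_natDegree_le {p : R[X]} {N : ℕ} (hp : p.natDegree ≤ N) :
    reflect (N + 1) p = X * reflect N p := by
  simpa [add_comm] using reflect_mul (1 : R[X]) p (F := 1) (by simp) hp

theorem reflect_eq_sum_range {p : R[X]} {N : ℕ} (hp : p.natDegree ≤ N) :
    reflect N p = ∑ i ∈ range (N + 1), C (p.coeff i) * X ^ (N - i) := by
  conv_lhs => rw [p.as_sum_range_C_mul_X_pow' (Nat.lt_succ_of_le hp)]
  rw [reflect_sum]
  refine sum_congr rfl fun i hi => ?_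
  rw [reflect_C_mul_X_pow, revAt_le (Nat.lt_succ_iff.mp (mem_range.mp hi))]

theorem reflect_pow_of_natDegree_le {p : R[X]} {N : ℕ} (hp : p.natDegree ≤ N) :
    ∀ k, reflect (N * k) (p ^ k) = reflect N p ^ k
  | 0 => by simp
  | k + 1 => by
    have hpk : (p ^ k).natDegree ≤ N * k :=
      natDegree_pow_le.trans (by rw [mul_comm]; exact Nat.mul_le_mul_right k hp)
    rw [pow_succ, Nat.mul_succ, reflect_mul _ _ hpk hp, reflect_pow_of_natDegree_le hp k, pow_succ]

theorem reflect_C_mul_X_pow_mul_pow {g : R[X]} {m n i : ℕ} (a : R) (hg : g.natDegree ≤ n)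
    (hi : i ≤ m) :
    reflect (m * n) (C a * X ^ (n * i) * g ^ (m - i)) = C a * reflect n g ^ (m - i) := by
  have hmn : m * n = n * i + n * (m - i) := by
    rw [← Nat.mul_add, Nat.add_sub_cancel' hi, mul_comm]
  rw [mul_assoc, reflect_C_mul, hmn, reflect_mul _ _ (natDegree_X_pow_le _)
    (natDegree_pow_le_of_le _ hg |>.trans (mul_comm _ _).le), reflect_monomial, revAt_le le_rfl,
    Nat.sub_self, pow_zero, one_mul, reflect_pow_of_natDegree_le hg]

theorem degree_C_mul_X_pow_mul_pow_lt {g : R[X]} {m n i : ℕ} (a : R) (hg : g.natDegree < n)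
    (hi : i < m) : degree (C a * X ^ (n * i) * g ^ (m - i)) < ↑(n * m) := by
  obtain ⟨k, rfl⟩ := Nat.exists_eq_add_of_lt hi
  have hdeg :
      natDegree (C a * X ^ (n * i) * g ^ (i + k + 1 - i)) ≤ n * i + (k + 1) * g.natDegree := by
    refine natDegree_mul_le.trans (add_le_add (natDegree_C_mul_X_pow_le a _) ?_)
    simpa [Nat.add_assoc] using natDegree_pow_le (p := g) (n := k + 1)
  refine degree_le_natDegree.trans_lt (WithBot.coe_lt_coe.mpr (hdeg.trans_lt ?_))
  nlinarith

theorem degree_sum_range_C_mul_X_pow_mul_pow_lt {g : R[X]} {m n : ℕ} (c : ℕ → R)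
    (hg : g.natDegree < n) :
    degree (∑ i ∈ range m, C (c i) * X ^ (n * i) * g ^ (m - i)) < ↑(n * m) :=
  (degree_sum_le _ _).trans_lt <| (Finset.sup_lt_iff (WithBot.bot_lt_coe _)).mpr fun _ hi =>
    degree_C_mul_X_pow_mul_pow_lt _ hg (mem_range.mp hi)

theorem monic_sum_C_coeff_mul_X_pow_mul_pow [Nontrivial R] {g h : R[X]} {m n : ℕ} (hh : h.Monic)
    (hdeg : h.natDegree = m) (hg : g.natDegree < n) :
    (∑ i ∈ range (m + 1), C (h.coeff i) * X ^ (n * i) * g ^ (m - i)).Monic ∧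
      (∑ i ∈ range (m + 1), C (h.coeff i) * X ^ (n * i) * g ^ (m - i)).natDegree = m * n := by
  have hlead : C (h.coeff m) * X ^ (n * m) * g ^ (m - m) = X ^ (n * m) := by
    rw [← hdeg, hh.coeff_natDegree, Nat.sub_self, pow_zero, mul_one, C_1, one_mul]
  have hlow := degree_sum_range_C_mul_X_pow_mul_pow_lt (m := m) h.coeff hg
  rw [← degree_X_pow (R := R)] at hlow
  rw [sum_range_succ, hlead]
  exact ⟨(monic_X_pow _).add_of_right hlow,
    by rw [natDegree_add_eq_right_of_degree_lt hlow, natDegree_X_pow, mul_comm]⟩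

end Semiring

section CommSemiring

variable [CommSemiring R]

theorem reflect_sum_C_coeff_mul_X_pow_mul_pow {g h : R[X]} {m n : ℕ} (hg : g.natDegree ≤ n)
    (hh : h.natDegree ≤ m) :
    reflect (m * n) (∑ i ∈ range (m + 1), C (h.coeff i) * X ^ (n * i) * g ^ (m - i)) =
      (reflect m h).comp (reflect n g) := by
  rw [reflect_sum, reflect_eq_sum_range hh, sum_comp]
  refine sum_congr rfl fun i hi => ?_
  rw [reflect_C_mul_X_pow_mul_pow _ hg (Nat.lt_succ_iff.mp (mem_range.mp hi)), mul_comp, C_comp,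
    X_pow_comp]

theorem eval_zero_sum_C_mul_X_pow_mul_pow {g : R[X]} {m n : ℕ} (c : ℕ → R) (hn : 0 < n)
    (hg : g.eval 0 = 1) :
    eval 0 (∑ i ∈ range (m + 1), C (c i) * X ^ (n * i) * g ^ (m - i)) = c 0 := by
  rw [eval_finsetSum, sum_eq_single 0]
  · simp [hg]
  · intro i _ hi
    simp [zero_pow (Nat.mul_ne_zero hn.ne' hi)]
  · simp

end CommSemiring

end Polynomial

theorem stmt13_general (F : Type) [Field F] (m n : ℕ) (hn : 0 < n)
    (g h : Polynomial F)
    (hg0 : Polynomial.eval 0 g = 1) (hgdeg : g.natDegree ≤ n - 1)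
    (hmonic : h.Monic) (hdeg : h.natDegree = m)
    (f : Polynomial F)
    (hf : f = ∑ i ∈ Finset.range (m + 1),
      Polynomial.C (h.coeff i) * Polynomial.X ^ (n * i) * g ^ (m - i)) :
    f.Monic ∧ f.natDegree = m * n ∧ Polynomial.eval 0 f = Polynomial.eval 0 h ∧
      Polynomial.C (Polynomial.eval 0 h)⁻¹ * Polynomial.reflect (m * n) f =
        (Polynomial.C (Polynomial.eval 0 h)⁻¹ * Polynomial.reflect m h).comp
          (Polynomial.X * Polynomial.reflect (n - 1) g) := by
  have hgn : g.natDegree < n := by omega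
  have hX : X * reflect (n - 1) g = reflect n g := by
    rw [← reflect_succ_of_natDegree_le hgdeg, Nat.sub_add_cancel hn]
  obtain ⟨hfm, hfdeg⟩ := monic_sum_C_coeff_mul_X_pow_mul_pow hmonic hdeg hgn
  have heval := eval_zero_sum_C_mul_X_pow_mul_pow h.coeff (m := m) hn hg0
  subst hf
  refine ⟨hfm, hfdeg, by rw [heval, coeff_zero_eq_eval_zero], ?_⟩
  rw [hX, mul_comp, C_comp, reflect_sum_C_coeff_mul_X_pow_mul_pow hgn.le hdeg.le]

/-- For `g` with `g(0) = 1`, `deg g ≤ n - 1`, and `h` monic of degree `m` with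
`h(0) ≠ 0`, the polynomial `f = ∑ h_i X^{n i} g^{m-i}` is monic of degree `mn`
with `f(0) = h(0)`, and its monic reciprocal equals the composition of the
monic reciprocal of `h` with `X^n g(1/X) = X · reflect_{n-1}(g)`. -/
theorem stmt13 (F : Type) [Field F] [Fintype F] (m n : ℕ) (hm : 0 < m) (hn : 0 < n)
    (g h : Polynomial F)
    (hg0 : Polynomial.eval 0 g = 1) (hgdeg : g.natDegree ≤ n - 1)
    (hmonic : h.Monic) (hdeg : h.natDegree = m) (hh0 : Polynomial.eval 0 h ≠ 0)
    (f : Polynomial F)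
    (hf : f = ∑ i ∈ Finset.range (m + 1),
      Polynomial.C (h.coeff i) * Polynomial.X ^ (n * i) * g ^ (m - i)) :
    f.Monic ∧ f.natDegree = m * n ∧ Polynomial.eval 0 f = Polynomial.eval 0 h ∧
      Polynomial.C (Polynomial.eval 0 h)⁻¹ * Polynomial.reflect (m * n) f =
        (Polynomial.C (Polynomial.eval 0 h)⁻¹ * Polynomial.reflect m h).comp
          (Polynomial.X * Polynomial.reflect (n - 1) g) :=
  stmt13_general F m n hn g h hg0 hgdeg hmonic hdeg f hf
end

section
/- Let F be a finite field, let h ∈ F[X] be a monic irreducible polynomial of degree m ≥ 1, let K be a field extension of F of degree m containing a root α of h, and let g ∈ F[X] be monic of degree n ≥ 1. Then the composition h(g(X)) is irreducible in F[X] if and only if the polynomial g(X) − α (the image of g in K[X] minus the constant α) is irreducible in K[X]. -/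
/-!
If `β` is a root of `g - α` over `K`, then `β` is a root of `h ∘ g`. When `h ∘ g` is irreducible
it is the minimal polynomial of `β` over `F`, so `m n ≤ [K(β) : F] = m [K(β) : K]`, forcing
`g - α` to be the minimal polynomial of `β` over `K`. Conversely, `K = F(α)` is, up to an
isomorphism fixing `α`, every simple extension `F(x)` with `x` a root of `h`, which is exactly
the hypothesis of Mathlib's `Polynomial.irreducible_comp`.
-/

open Polynomial IntermediateField Module

section

variable {R S : Type*} [CommRing R] [CommRing S] [Nontrivial S] (f : R →+* S)

theorem Polynomial.Monic.map_sub_C {g : R[X]} (hg : g.Monic) (hg0 : g.natDegree ≠ 0) (a : S) :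
    (g.map f - C a).Monic := by
  refine (hg.map f).sub_of_left (degree_C_le.trans_lt ?_)
  rw [hg.degree_map, ← natDegree_pos_iff_degree_pos]
  exact Nat.pos_of_ne_zero hg0

end

section

variable {F K : Type*} [Field F] [Field K] [Algebra F K]

theorem irreducible_map_sub_C_algEquiv {L : Type*} [Field L] [Algebra F L] (σ : K ≃ₐ[F] L)
    (g : F[X]) {a : K} (hg : Irreducible (g.map (algebraMap F K) - C a)) :
    Irreducible (g.map (algebraMap F L) - C (σ a)) := by
  convert hg.map (mapEquiv σ.toRingEquiv)
  simp only [mapEquiv_apply, Polynomial.map_sub, Polynomial.map_map, map_C]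
  congr 2
  ext
  simp

theorem IntermediateField.adjoin_simple_eq_top_of_finrank_eq {α : K} (hα : IsIntegral F α)
    (hK : finrank F K = (minpoly F α).natDegree) : F⟮α⟯ = ⊤ := by
  have : FiniteDimensional F K := .of_finrank_pos (hK ▸ minpoly.natDegree_pos hα)
  exact eq_of_le_of_finrank_eq le_top (by rw [adjoin.finrank hα, finrank_top', hK])

theorem exists_algEquiv_adjoin_of_minpoly_eq {α : K} (hα : IsIntegral F α) (htop : F⟮α⟯ = ⊤)
    {L : Type*} [Field L] [Algebra F L] {x : L} (hx : minpoly F x = minpoly F α) :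
    ∃ σ : K ≃ₐ[F] F⟮x⟯, σ α = AdjoinSimple.gen F x := by
  have hxint : IsIntegral F x := minpoly.ne_zero_iff.mp (hx ▸ minpoly.ne_zero hα)
  let pbK : PowerBasis F K :=
    (adjoin.powerBasis hα).map ((equivOfEq htop).trans topEquiv)
  have hmin : minpoly F pbK.gen = minpoly F (adjoin.powerBasis hxint).gen := by
    simp [pbK, minpoly_gen, hx]
  exact ⟨pbK.equivOfMinpoly _ hmin, pbK.equivOfMinpoly_gen _ hmin⟩

theorem natDegree_minpoly_le_finrank_mul {L : Type*} [Field L] [Algebra F L] [Algebra K L]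
    [IsScalarTower F K L] [FiniteDimensional F K] {β : L} (hβ : IsIntegral K β) :
    (minpoly F β).natDegree ≤ finrank F K * (minpoly K β).natDegree := by
  have : FiniteDimensional K K⟮β⟯ := adjoin.finiteDimensional hβ
  have : FiniteDimensional F K⟮β⟯ := .trans F K K⟮β⟯
  have : IsScalarTower F K⟮β⟯ L := .of_algebraMap_eq fun x => by
    rw [IsScalarTower.algebraMap_apply F K L, IsScalarTower.algebraMap_apply F K K⟮β⟯]; rfl
  rw [← adjoin.finrank hβ, finrank_mul_finrank F K K⟮β⟯, ← AdjoinSimple.algebraMap_gen K β,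
    minpoly.algebraMap_eq (algebraMap K⟮β⟯ L).injective]
  exact minpoly.natDegree_le _

theorem irreducible_map_sub_C_of_irreducible_comp {α : K} (hα : IsIntegral F α)
    (hK : finrank F K = (minpoly F α).natDegree) {g : F[X]} (hg : g.Monic)
    (hcomp : Irreducible ((minpoly F α).comp g)) :
    Irreducible (g.map (algebraMap F K) - C α) := by
  have : FiniteDimensional F K := .of_finrank_pos (hK ▸ minpoly.natDegree_pos hα)
  have hg0 : g.natDegree ≠ 0 := by
    have := hcomp.natDegree_pos
    rw [natDegree_comp] at this
    exact (Nat.pos_of_mul_pos_left this).ne'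
  set G := g.map (algebraMap F K) - C α
  have hGmonic : G.Monic := hg.map_sub_C _ hg0 α
  have hGdeg : G.natDegree = g.natDegree := by
    rw [natDegree_sub_C, natDegree_map]
  obtain ⟨β, hβ⟩ := IsAlgClosed.exists_aeval_eq_zero (AlgebraicClosure K) G
    (by rw [degree_eq_natDegree hGmonic.ne_zero, hGdeg]; exact_mod_cast hg0)
  have hgβ : aeval β g = algebraMap K _ α := by
    rwa [map_sub, aeval_C, aeval_map_algebraMap, sub_eq_zero] at hβ
  have hβint : IsIntegral K β := ⟨G, hGmonic, by rwa [← aeval_def]⟩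
  have hminβ : minpoly F β = (minpoly F α).comp g :=
    (minpoly.eq_of_irreducible_of_monic hcomp
      (by rw [aeval_comp, hgβ, aeval_algebraMap_apply, minpoly.aeval, map_zero])
      ((minpoly.monic hα).comp hg hg0)).symm
  have hdeg : g.natDegree ≤ (minpoly K β).natDegree := by
    have := natDegree_minpoly_le_finrank_mul (F := F) hβint
    rw [hminβ, natDegree_comp, hK] at this
    exact Nat.le_of_mul_le_mul_left this (minpoly.natDegree_pos hα)
  rw [eq_of_monic_of_dvd_of_natDegree_le (minpoly.monic hβint) hGmonic
    (minpoly.dvd K β hβ) (hGdeg.trans_le hdeg)]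
  exact minpoly.irreducible hβint

theorem irreducible_comp_minpoly_iff {α : K} (hα : IsIntegral F α)
    (hK : finrank F K = (minpoly F α).natDegree) {g : F[X]} (hg : g.Monic) :
    Irreducible ((minpoly F α).comp g) ↔ Irreducible (g.map (algebraMap F K) - C α) := by
  refine ⟨irreducible_map_sub_C_of_irreducible_comp hα hK hg, fun hG => ?_⟩
  refine irreducible_comp (minpoly.monic hα) hg (minpoly.irreducible hα) fun E _ _ x hx => ?_
  obtain ⟨σ, hσ⟩ := exists_algEquiv_adjoin_of_minpoly_eq hα
    (adjoin_simple_eq_top_of_finrank_eq hα hK) hx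
  rw [← hσ]
  exact irreducible_map_sub_C_algEquiv σ g hG

end

theorem stmt14_general (F K : Type) [Field F] [Field K] [Algebra F K]
    (m : ℕ) (hrank : Module.finrank F K = m)
    (h : Polynomial F) (hmonic : h.Monic) (hdeg : h.natDegree = m)
    (hirr : Irreducible h) (α : K) (hroot : Polynomial.aeval α h = 0)
    (g : Polynomial F) (hgmonic : g.Monic) :
    Irreducible (h.comp g) ↔
      Irreducible (g.map (algebraMap F K) - Polynomial.C α) := by
  have hα : IsIntegral F α := ⟨h, hmonic, by rwa [← aeval_def]⟩
  obtain rfl : h = minpoly F α := minpoly.eq_of_irreducible_of_monic hirr hroot hmonic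
  exact irreducible_comp_minpoly_iff hα (hrank.trans hdeg.symm) hgmonic

/-- For a finite field `F`, a degree-`m` extension `K/F`, a monic irreducible
`h ∈ F[X]` of degree `m` with root `α ∈ K`, and `g ∈ F[X]` monic of degree
`n ≥ 1`: `h(g(X))` is irreducible in `F[X]` if and only if `g(X) - α` is
irreducible in `K[X]`. -/
theorem stmt14 (F K : Type) [Field F] [Fintype F] [Field K] [Algebra F K]
    (m n : ℕ) (hm : 1 ≤ m) (hn : 1 ≤ n) (hrank : Module.finrank F K = m)
    (h : Polynomial F) (hmonic : h.Monic) (hdeg : h.natDegree = m)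
    (hirr : Irreducible h) (α : K) (hroot : Polynomial.aeval α h = 0)
    (g : Polynomial F) (hgmonic : g.Monic) (hgdeg : g.natDegree = n) :
    Irreducible (h.comp g) ↔
      Irreducible (g.map (algebraMap F K) - Polynomial.C α) :=
  stmt14_general F K m hrank h hmonic hdeg hirr α hroot g hgmonic
end
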